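/- arXiv:2407.08301 — 4 statements merged into one kernel-verified Lean document; each statement's English description precedes it below -/
import Mathlib

section
/- Let G = (V, E) be a finite simple connected graph with boundary δΩ whose vertex degrees are bounded above by D. Suppose there exist maps v : V → ℝ³ and r : V → ℝ such that ‖v_x‖ = 1 for every x ∈ V, ‖v_x − v_y‖ ≤ r_x + r_y for every edge {x, y} ∈ E, ∑_{x ∈ V} r_x² ≤ 4, and ∑_{x ∈ δΩ} v_x = 0 (this is the configuration produced for every planar graph by the circle packing theorem: the v_x are the centers of kissing caps with disjoint interiors on the unit sphere whose boundary centers have centroid the origin, and the r_x are the radii). Then λ₂(G, δΩ) ≤ 8D / |δΩ|. -/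
open Finset

variable {V : Type*}

/-- The Dirichlet energy `∑_{{x,y} ∈ E} (f(x) - f(y))²` of a function on the vertices. -/
noncomputable def graphEnergy [Fintype V] (G : SimpleGraph V) (f : V → ℝ) : ℝ :=
  ∑ e ∈ G.edgeSet.toFinite.toFinset,
    Sym2.lift ⟨fun x y => (f x - f y) ^ 2, fun _ _ => by ring⟩ e

/-- The first non-trivial Steklov eigenvalue `λ₂(G, δΩ)`. -/
noncomputable def steklovLambda2 [Fintype V] (G : SimpleGraph V) (B : Finset V) : ℝ :=
  sInf {r | ∃ f : V → ℝ, ∑ x ∈ B, f x = 0 ∧ (∃ x ∈ B, f x ≠ 0) ∧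
    r = graphEnergy G f / ∑ x ∈ B, f x ^ 2}

lemma sum_edge_lift_add [Fintype V] (G : SimpleGraph V) [DecidableRel G.Adj] (g : V → ℝ) :
    ∑ e ∈ G.edgeFinset, Sym2.lift ⟨fun x y => g x + g y, fun _ _ => by ring⟩ e
      = ∑ x : V, (G.degree x : ℝ) * g x := by
  classical
  have hdart : ∑ d : G.Dart, g d.toProd.1 = ∑ x : V, (G.degree x : ℝ) * g x := by
    rw [← Finset.sum_fiberwise_of_maps_to (g := fun d : G.Dart => d.toProd.1)
      (fun d _ => Finset.mem_univ d.toProd.1) (fun d : G.Dart => g d.toProd.1)]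
    refine Finset.sum_congr rfl fun x _ => ?_
    have h1 : ∀ d ∈ Finset.univ.filter (fun d : G.Dart => d.toProd.1 = x),
        g d.toProd.1 = g x := fun d hd => by
      rw [Finset.mem_filter] at hd; rw [hd.2]
    rw [Finset.sum_congr rfl h1, Finset.sum_const, ← G.dart_fst_fiber_card_eq_degree x]
    simp only [nsmul_eq_mul]
  rw [← hdart]
  rw [← Finset.sum_fiberwise_of_maps_to (g := fun d : G.Dart => d.edge)
      (fun d _ => SimpleGraph.mem_edgeFinset.mpr d.edge_mem)
      (fun d : G.Dart => g d.toProd.1)]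
  refine Finset.sum_congr rfl fun e he => ?_
  rw [SimpleGraph.mem_edgeFinset] at he
  induction e with
  | _ x y =>
    let d : G.Dart := ⟨(x, y), he⟩
    have hf : Finset.univ.filter (fun d' : G.Dart => d'.edge = s(x, y)) = {d, d.symm} := by
      have := d.edge_fiber
      exact this
    rw [Sym2.lift_mk, hf, Finset.sum_pair d.symm_ne.symm]
    rfl

lemma graphEnergy_eq [Fintype V] (G : SimpleGraph V) [DecidableRel G.Adj] (f : V → ℝ) :
    graphEnergy G f = ∑ e ∈ G.edgeFinset,
      Sym2.lift ⟨fun x y => (f x - f y) ^ 2, fun _ _ => by ring⟩ e := by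
  unfold graphEnergy
  congr 1
  ext e; simp

lemma graphEnergy_nonneg [Fintype V] (G : SimpleGraph V) (f : V → ℝ) :
    0 ≤ graphEnergy G f := by
  refine Finset.sum_nonneg fun e _ => ?_
  induction e with
  | _ x y => rw [Sym2.lift_mk]; positivity

lemma euclid_normsq (w : EuclideanSpace ℝ (Fin 3)) : ‖w‖ ^ 2 = ∑ i, w i ^ 2 := by
  rw [EuclideanSpace.norm_eq, Real.sq_sqrt (by positivity)]
  simp [sq_abs]

/-- Given (the circle-packing configuration of) unit vectors `v_x ∈ ℝ³` and radii `r_x` with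
`‖v_x - v_y‖ ≤ r_x + r_y` along edges, `∑ r_x² ≤ 4`, and `∑_{x ∈ δΩ} v_x = 0`, a graph with
degrees bounded by `D` satisfies `λ₂ ≤ 8 D / |δΩ|`. -/
theorem lambda2_planar [Fintype V] (G : SimpleGraph V) [DecidableRel G.Adj]
    (B : Finset V) (D : ℕ) (hconn : G.Connected)
    (hleaf : ∀ x ∈ B, G.degree x = 1) (hB : 2 ≤ B.card)
    (hD : ∀ x : V, G.degree x ≤ D)
    (v : V → EuclideanSpace ℝ (Fin 3)) (r : V → ℝ)
    (hv1 : ∀ x : V, ‖v x‖ = 1)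
    (hkiss : ∀ x y : V, G.Adj x y → ‖v x - v y‖ ≤ r x + r y)
    (hr : ∑ x : V, r x ^ 2 ≤ 4)
    (hv0 : ∑ x ∈ B, v x = 0) :
    steklovLambda2 G B ≤ 8 * D / B.card := by
  classical
  set n : ℝ := (B.card : ℝ) with hn
  have hn0 : (0 : ℝ) < n := by
    have h2 : (2 : ℝ) ≤ (B.card : ℝ) := by exact_mod_cast hB
    rw [hn]; linarith
  set c : ℝ := 8 * D / n with hc
  have hc0 : 0 ≤ c := by positivity
  set f : Fin 3 → V → ℝ := fun i x => v x i with hf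
  set S : Fin 3 → ℝ := fun i => ∑ x ∈ B, f i x ^ 2 with hS
  have hS_nonneg : ∀ i, 0 ≤ S i := fun i => Finset.sum_nonneg fun x _ => sq_nonneg _
  -- sum of denominators
  have hSsum : ∑ i, S i = n := by
    rw [hS]
    rw [Finset.sum_comm]
    have : ∀ x ∈ B, ∑ i, f i x ^ 2 = 1 := by
      intro x _
      have := euclid_normsq (v x)
      rw [hv1 x] at this
      simpa [hf] using this.symm
    rw [Finset.sum_congr rfl this]
    simp [hn]
  -- sum of energies
  have hEsum : ∑ i, graphEnergy G (f i) ≤ 8 * D := by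
    have h1 : ∑ i, graphEnergy G (f i) = ∑ e ∈ G.edgeFinset,
        Sym2.lift ⟨fun x y => ‖v x - v y‖ ^ 2, fun x y => by dsimp only; rw [norm_sub_rev]⟩ e := by
      simp only [graphEnergy_eq]
      rw [Finset.sum_comm]
      refine Finset.sum_congr rfl fun e _ => ?_
      induction e with
      | _ x y =>
        simp only [Sym2.lift_mk]
        rw [euclid_normsq]
        refine Finset.sum_congr rfl fun i _ => ?_
        simp [hf]
    have h2 : ∑ e ∈ G.edgeFinset,
        Sym2.lift ⟨fun x y => ‖v x - v y‖ ^ 2, fun x y => by dsimp only; rw [norm_sub_rev]⟩ e ≤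
        ∑ e ∈ G.edgeFinset,
        Sym2.lift ⟨fun x y => (2 * r x ^ 2) + (2 * r y ^ 2), fun _ _ => by ring⟩ e := by
      refine Finset.sum_le_sum fun e he => ?_
      rw [SimpleGraph.mem_edgeFinset] at he
      induction e with
      | _ x y =>
        simp only [Sym2.lift_mk]
        have hk := hkiss x y he
        have hnn : (0 : ℝ) ≤ ‖v x - v y‖ := norm_nonneg _
        have hsq := pow_le_pow_left₀ hnn hk 2
        nlinarith [sq_nonneg (r x - r y)]
    have h3 : ∑ e ∈ G.edgeFinset,
        Sym2.lift ⟨fun x y => (2 * r x ^ 2) + (2 * r y ^ 2), fun _ _ => by ring⟩ e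
        = ∑ x : V, (G.degree x : ℝ) * (2 * r x ^ 2) :=
      sum_edge_lift_add G (fun x => 2 * r x ^ 2)
    have h4 : ∑ x : V, (G.degree x : ℝ) * (2 * r x ^ 2) ≤ ∑ x : V, (D : ℝ) * (2 * r x ^ 2) := by
      refine Finset.sum_le_sum fun x _ => ?_
      have : (G.degree x : ℝ) ≤ D := by exact_mod_cast hD x
      nlinarith [sq_nonneg (r x)]
    have h5 : ∑ x : V, (D : ℝ) * (2 * r x ^ 2) = 2 * D * ∑ x : V, r x ^ 2 := by
      rw [Finset.mul_sum]
      exact Finset.sum_congr rfl fun x _ => by ring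
    have hD0 : (0 : ℝ) ≤ D := Nat.cast_nonneg D
    calc ∑ i, graphEnergy G (f i) = _ := h1
      _ ≤ _ := h2
      _ = _ := h3
      _ ≤ _ := h4
      _ = 2 * D * ∑ x : V, r x ^ 2 := h5
      _ ≤ 8 * D := by nlinarith
  -- pigeonhole: pick a good coordinate
  have key : ∃ i, S i ≠ 0 ∧ graphEnergy G (f i) ≤ c * S i := by
    by_contra h
    push_neg at h
    have hall : ∀ i, c * S i ≤ graphEnergy G (f i) := by
      intro i
      by_cases hi : S i = 0
      · rw [hi, mul_zero]; exact graphEnergy_nonneg G (f i)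
      · exact (h i hi).le
    obtain ⟨i0, hi0⟩ : ∃ i, S i ≠ 0 := by
      by_contra hcon
      push_neg at hcon
      have : ∑ i, S i = 0 := by simp [hcon]
      rw [hSsum] at this; linarith
    have hstrict : ∑ i, c * S i < ∑ i, graphEnergy G (f i) :=
      Finset.sum_lt_sum (fun i _ => hall i) ⟨i0, Finset.mem_univ i0, h i0 hi0⟩
    have hsum : ∑ i, c * S i = 8 * D := by
      rw [← Finset.mul_sum, hSsum, hc, div_mul_cancel₀]
      exact ne_of_gt hn0
    rw [hsum] at hstrict
    linarith
  obtain ⟨i, hSne, hle⟩ := key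
  have hSpos : 0 < S i := lt_of_le_of_ne (hS_nonneg i) (Ne.symm hSne)
  -- the ratio is in the Steklov set
  have hsum0 : ∑ x ∈ B, f i x = 0 := by
    have h := map_sum (EuclideanSpace.proj (𝕜 := ℝ) i) (fun x => v x) B
    rw [hv0] at h
    simp only [map_zero] at h
    simpa [hf] using h.symm
  have hne : ∃ x ∈ B, f i x ≠ 0 := by
    by_contra hcon
    push_neg at hcon
    apply hSne
    rw [hS]
    exact Finset.sum_eq_zero fun x hx => by rw [hcon x hx]; ring
  have hmem : graphEnergy G (f i) / S i ∈ {ρ | ∃ g : V → ℝ, ∑ x ∈ B, g x = 0 ∧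
      (∃ x ∈ B, g x ≠ 0) ∧ ρ = graphEnergy G g / ∑ x ∈ B, g x ^ 2} :=
    ⟨f i, hsum0, hne, rfl⟩
  have hbdd : BddBelow {ρ | ∃ g : V → ℝ, ∑ x ∈ B, g x = 0 ∧
      (∃ x ∈ B, g x ≠ 0) ∧ ρ = graphEnergy G g / ∑ x ∈ B, g x ^ 2} := by
    refine ⟨0, fun ρ hρ => ?_⟩
    obtain ⟨g, _, _, rfl⟩ := hρ
    exact div_nonneg (graphEnergy_nonneg G g) (Finset.sum_nonneg fun x _ => sq_nonneg _)
  have h1 : steklovLambda2 G B ≤ graphEnergy G (f i) / S i := csInf_le hbdd hmem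
  have h2 : graphEnergy G (f i) / S i ≤ c := (div_le_iff₀ hSpos).mpr hle
  calc steklovLambda2 G B ≤ graphEnergy G (f i) / S i := h1
    _ ≤ c := h2
    _ = 8 * D / B.card := by rw [hc, hn]
end

section
/- Let G = (V, E) be a block graph with |V| ≥ 3 and boundary δΩ. Let D be the maximum degree of G and let B be the maximum size of the blocks in G. Then λ₂(G, δΩ) ≤ B² (D − 1) / |δΩ|. -/
open Finset

variable {V : Type*}

/-- A set `S` of at least two vertices induces a connected subgraph without cut vertices
(for `|S| ≥ 3` this is 2-connectedness; a single edge also qualifies). -/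
def HasNoCutVertex (G : SimpleGraph V) (S : Set V) : Prop :=
  2 ≤ S.ncard ∧ (G.induce S).Connected ∧ ∀ v ∈ S, (G.induce (S \ {v})).Connected

/-- `S` is the vertex set of a block of `G`: a maximal 2-connected subgraph
(a single edge with its two endpoints counts as a block). -/
def IsBlockOf (G : SimpleGraph V) (S : Set V) : Prop :=
  HasNoCutVertex G S ∧ ∀ T : Set V, S ⊆ T → HasNoCutVertex G T → T = S

/-- A block graph is a connected graph in which every block is a complete graph. -/
def IsBlockGraph (G : SimpleGraph V) : Prop :=
  G.Connected ∧ ∀ S : Set V, IsBlockOf G S → ∀ x ∈ S, ∀ y ∈ S, x ≠ y → G.Adj x y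


/-- The graph `G` with all vertices in `K` deleted (kept as isolated vertices). -/
def Gdel (G : SimpleGraph V) (K : Set V) : SimpleGraph V where
  Adj x y := G.Adj x y ∧ x ∉ K ∧ y ∉ K
  symm := ⟨by intro x y ⟨h, hx, hy⟩; exact ⟨h.symm, hy, hx⟩⟩
  loopless := ⟨by intro x ⟨h, _⟩; exact G.loopless.irrefl x h⟩

lemma Gdel_adj {G : SimpleGraph V} {K : Set V} {x y : V} (h : G.Adj x y) (hx : x ∉ K)
    (hy : y ∉ K) : (Gdel G K).Adj x y := ⟨h, hx, hy⟩

lemma Gdel_le (G : SimpleGraph V) (K : Set V) : Gdel G K ≤ G := fun _ _ h => h.1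

lemma Gdel_mono (G : SimpleGraph V) {K K' : Set V} (h : K ⊆ K') : Gdel G K' ≤ Gdel G K :=
  fun _ _ ⟨ha, hx, hy⟩ => ⟨ha, fun c => hx (h c), fun c => hy (h c)⟩

/-- A walk in `G` avoiding `K` gives reachability in `Gdel G K`. -/
lemma reach_del {G : SimpleGraph V} {K : Set V} : ∀ {a b : V} (w : G.Walk a b),
    (∀ v ∈ w.support, v ∉ K) → (Gdel G K).Reachable a b
  | _, _, SimpleGraph.Walk.nil, _ => SimpleGraph.Reachable.refl _
  | a, b, SimpleGraph.Walk.cons ha p, h => by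
    refine (SimpleGraph.Adj.reachable (Gdel_adj ha (h a (by simp)) (h _ (by simp)))).trans
      (reach_del p ?_)
    intro v hv; exact h v (by simp [SimpleGraph.Walk.support_cons, hv])

lemma support_del {G : SimpleGraph V} {K : Set V} : ∀ {a b : V} (w : (Gdel G K).Walk a b),
    ∀ v ∈ w.support, v = a ∨ v ∉ K
  | _, _, SimpleGraph.Walk.nil => by intro v hv; simp at hv; exact Or.inl hv
  | a, b, SimpleGraph.Walk.cons ha p => by
    intro v hv
    rw [SimpleGraph.Walk.support_cons] at hv
    rcases List.mem_cons.mp hv with h | h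
    · exact Or.inl h
    · rcases support_del p v h with h' | h'
      · subst h'; exact Or.inr ha.2.2
      · exact Or.inr h'

lemma reach_del_notMem {G : SimpleGraph V} {K : Set V} {a b : V}
    (h : (Gdel G K).Reachable a b) (hb : b ≠ a) : b ∉ K := by
  obtain ⟨w⟩ := h
  rcases support_del w b w.end_mem_support with h' | h'
  · exact absurd h' hb
  · exact h'

lemma reach_of_del {G : SimpleGraph V} {K : Set V} {a b : V}
    (h : (Gdel G K).Reachable a b) : G.Reachable a b :=
  h.mono (Gdel_le G K)

/-- From a walk in `G` ending in `K`, extract the first vertex of `K` hit, reached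
avoiding `K`. If the start is in `K`, that vertex is the start itself. -/
lemma exists_first_hit {G : SimpleGraph V} {K : Set V} : ∀ {a b : V} (_ : G.Walk a b),
    b ∈ K → ∃ z ∈ K, (Gdel G (K \ {z})).Reachable a z
  | _, _, SimpleGraph.Walk.nil, hb => ⟨_, hb, SimpleGraph.Reachable.refl _⟩
  | a, b, SimpleGraph.Walk.cons (v := y) ha p, hb => by
    by_cases hx : a ∈ K
    · exact ⟨a, hx, SimpleGraph.Reachable.refl _⟩
    · obtain ⟨z, hz, hr⟩ := exists_first_hit p hb
      by_cases hy : y = z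
      · subst hy
        exact ⟨y, hz, SimpleGraph.Adj.reachable (Gdel_adj ha (by simp [hx]) (by simp))⟩
      · have hyK : y ∉ K \ {z} := by
          by_contra hyk
          obtain ⟨w'⟩ := hr
          cases w' with
          | nil => exact hy rfl
          | cons hadj p' => exact hadj.2.1 hyk
        exact ⟨z, hz, (SimpleGraph.Adj.reachable (Gdel_adj ha (by simp [hx]) hyK)).trans hr⟩

/-- From reachability to a vertex `u`, find a neighbor `y` of `u` with `a` reachable
from `y` avoiding `u`.  Requires `a ≠ u`. -/
lemma exists_last_nbr {G : SimpleGraph V} {a u : V} (h : G.Reachable a u) (hau : a ≠ u) :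
    ∃ y, G.Adj y u ∧ (Gdel G {u}).Reachable a y := by
  classical
  obtain ⟨p, hp⟩ := h.some.toPath
  have hqp : p.reverse.IsPath := hp.reverse
  rcases hq : p.reverse with _ | @⟨_, y, _, hadj, q⟩
  · exact absurd rfl hau
  · refine ⟨y, hadj.symm, ?_⟩
    rw [hq] at hqp
    have hns : u ∉ q.support := by
      have := hqp.support_nodup
      rw [SimpleGraph.Walk.support_cons] at this
      exact (List.nodup_cons.mp this).1
    refine (reach_del q ?_).symm
    intro v hv
    simp only [Set.mem_singleton_iff]
    rintro rfl
    exact hns hv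

/-! ### Interface between `G.induce S` connectivity and `Gdel G Sᶜ` reachability -/

lemma induce_reach {G : SimpleGraph V} {S : Set V} : ∀ {a b : V}
    (_ : (Gdel G Sᶜ).Walk a b) (ha : a ∈ S) (hb : b ∈ S),
    (G.induce S).Reachable ⟨a, ha⟩ ⟨b, hb⟩
  | _, _, SimpleGraph.Walk.nil, _, _ => SimpleGraph.Reachable.refl _
  | a, b, SimpleGraph.Walk.cons (v := y) hadj p, ha, hb => by
    have hy : y ∈ S := by simpa using hadj.2.2
    exact (SimpleGraph.Adj.reachable (by exact hadj.1 :
      (G.induce S).Adj ⟨a, ha⟩ ⟨y, hy⟩)).trans (induce_reach p hy hb)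

lemma del_reach_of_induce {G : SimpleGraph V} {S : Set V} : ∀ {a b : S},
    (G.induce S).Walk a b → (Gdel G Sᶜ).Reachable a.1 b.1
  | _, _, SimpleGraph.Walk.nil => SimpleGraph.Reachable.refl _
  | a, b, SimpleGraph.Walk.cons (v := y) hadj p =>
    (SimpleGraph.Adj.reachable (Gdel_adj (G := G) (K := Sᶜ) (by simpa using hadj)
      (by simp [a.2]) (by simp [y.2]))).trans (del_reach_of_induce p)

lemma induce_connected_of_reach {G : SimpleGraph V} {S : Set V} (hne : S.Nonempty)
    (h : ∀ x ∈ S, ∀ y ∈ S, (Gdel G Sᶜ).Reachable x y) : (G.induce S).Connected := by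
  rw [SimpleGraph.connected_iff]
  constructor
  · rintro ⟨x, hx⟩ ⟨y, hy⟩
    obtain ⟨w⟩ := h x hx y hy
    exact induce_reach w hx hy
  · exact ⟨⟨hne.choose, hne.choose_spec⟩⟩

lemma reach_of_induce_connected {G : SimpleGraph V} {S : Set V}
    (h : (G.induce S).Connected) {x y : V} (hx : x ∈ S) (hy : y ∈ S) :
    (Gdel G Sᶜ).Reachable x y := by
  obtain ⟨w⟩ := h.preconnected ⟨x, hx⟩ ⟨y, hy⟩
  exact del_reach_of_induce w

/-! ### Components of vertex-deleted graphs -/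

/-- The component of `x` in `G` minus the vertex set `K`. -/
def Vcmp (G : SimpleGraph V) (K : Set V) (x : V) : Set V := {y | (Gdel G K).Reachable x y}

lemma mem_Vcmp_self (G : SimpleGraph V) (K : Set V) (x : V) : x ∈ Vcmp G K x :=
  SimpleGraph.Reachable.refl _

lemma Vcmp_eq_of_mem {G : SimpleGraph V} {K : Set V} {x y : V} (h : y ∈ Vcmp G K x) :
    Vcmp G K y = Vcmp G K x := by
  ext z
  exact ⟨fun hz => SimpleGraph.Reachable.trans h hz, fun hz => SimpleGraph.Reachable.trans
    (SimpleGraph.Reachable.symm h) hz⟩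

/-- Closure of a component: an edge leaving `Vcmp G K x` must enter `K`. -/
lemma Vcmp_closed {G : SimpleGraph V} {K : Set V} {x y z : V} (hy : y ∈ Vcmp G K y)
    (hmem : y ∈ Vcmp G K x) (hadj : G.Adj y z) (hyK : y ∉ K) (hzK : z ∉ K) :
    z ∈ Vcmp G K x :=
  SimpleGraph.Reachable.trans hmem (SimpleGraph.Adj.reachable (Gdel_adj hadj hyK hzK))

lemma Vcmp_mem_not_in_K {G : SimpleGraph V} {K : Set V} {x y : V} (hx : x ∉ K)
    (h : y ∈ Vcmp G K x) : y ∉ K := by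
  rcases eq_or_ne y x with rfl | hne
  · exact hx
  · exact reach_del_notMem h hne

/-! ### Blocks -/

section Blocks
variable [Fintype V] {G : SimpleGraph V}

lemma hasNoCutVertex_pair {x y : V} (h : G.Adj x y) : HasNoCutVertex G {x, y} := by
  have hxy : x ≠ y := G.ne_of_adj h
  refine ⟨by rw [Set.ncard_pair hxy], ?_, ?_⟩
  · refine induce_connected_of_reach ⟨x, by simp⟩ ?_
    have hr : (Gdel G ({x, y} : Set V)ᶜ).Reachable x y :=
      SimpleGraph.Adj.reachable (Gdel_adj h (by simp) (by simp))
    rintro a (rfl | ha) b (rfl | hb) <;> simp_all <;>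
      first
        | exact SimpleGraph.Reachable.refl _
        | (try subst ha); (try subst hb); first | exact hr | exact hr.symm
  · intro v hv
    rcases hv with rfl | hv
    · have : ({v, y} : Set V) \ {v} = {y} := by
        ext a; simp only [Set.mem_diff, Set.mem_insert_iff, Set.mem_singleton_iff]
        constructor
        · rintro ⟨rfl | h1, h2⟩ <;> tauto
        · rintro rfl; exact ⟨Or.inr rfl, fun hh => hxy hh.symm⟩
      rw [this]
      refine induce_connected_of_reach ⟨y, rfl⟩ ?_
      rintro a rfl b rfl; exact SimpleGraph.Reachable.refl _
    · rcases hv with rfl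
      have : ({x, v} : Set V) \ {v} = {x} := by
        ext a; simp only [Set.mem_diff, Set.mem_insert_iff, Set.mem_singleton_iff]
        constructor
        · rintro ⟨rfl | h1, h2⟩ <;> tauto
        · rintro rfl; exact ⟨Or.inl rfl, fun hh => hxy hh⟩
      rw [this]
      refine induce_connected_of_reach ⟨x, rfl⟩ ?_
      rintro a rfl b rfl; exact SimpleGraph.Reachable.refl _

lemma exists_block_of_edge {x y : V} (h : G.Adj x y) :
    ∃ W : Set V, IsBlockOf G W ∧ x ∈ W ∧ y ∈ W := by
  classical
  set F : Set (Set V) := {T | x ∈ T ∧ y ∈ T ∧ HasNoCutVertex G T} with hF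
  have hFne : F.Nonempty := ⟨{x, y}, by simp, by simp, hasNoCutVertex_pair h⟩
  obtain ⟨W, hW, hmax⟩ := Set.Finite.exists_maximalFor Set.ncard F (Set.toFinite F) hFne
  refine ⟨W, ⟨hW.2.2, ?_⟩, hW.1, hW.2.1⟩
  intro T hsub hT
  have hTF : T ∈ F := ⟨hsub hW.1, hsub hW.2.1, hT⟩
  have hle : W.ncard ≤ T.ncard := Set.ncard_le_ncard hsub (Set.toFinite T)
  have := hmax (j := T) hTF hle
  exact (Set.eq_of_subset_of_ncard_le hsub this.ge (Set.toFinite T)).symm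

end Blocks


/-! ### Walk segment utilities -/

section Segs
variable {G : SimpleGraph V}

lemma reach_end_of_support {t b : V} (q : G.Walk t b) (S : Set V)
    (hS : ∀ v ∈ q.support, v ∈ S) {a : V} (ha : a ∈ q.support) :
    (Gdel G Sᶜ).Reachable a b := by
  classical
  exact reach_del (q.dropUntil a ha)
    (fun v hv => by simpa using hS v (q.support_dropUntil_subset ha hv))

lemma reach_start_of_support {t b : V} (q : G.Walk t b) (S : Set V)
    (hS : ∀ v ∈ q.support, v ∈ S) {a : V} (ha : a ∈ q.support) :
    (Gdel G Sᶜ).Reachable a t := by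
  refine reach_end_of_support q.reverse S ?_ (by simpa using ha)
  intro v hv; exact hS v (by simpa using hv)

lemma reach_ends_avoid {S : Set V} {x : V} (hxS : x ∉ S) :
    ∀ {t b : V} (q : G.Walk t b), q.support.Nodup →
    (∀ v ∈ q.support, v ≠ x → v ∈ S) →
    ∀ {a : V}, a ∈ q.support → a ≠ x →
    (Gdel G Sᶜ).Reachable a t ∨ (Gdel G Sᶜ).Reachable a b
  | t, _, SimpleGraph.Walk.nil, _, _, a, ha, _ => by
    simp only [SimpleGraph.Walk.support_nil, List.mem_singleton] at ha
    subst ha; exact Or.inl (SimpleGraph.Reachable.refl _)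
  | t, b, SimpleGraph.Walk.cons (v := y) hadj q', hnd, hL, a, ha, hax => by
    classical
    rcases eq_or_ne a t with rfl | hat
    · exact Or.inl (SimpleGraph.Reachable.refl _)
    · rw [SimpleGraph.Walk.support_cons] at hnd hL ha
      have ha' : a ∈ q'.support := by
        rcases List.mem_cons.mp ha with h | h
        · exact absurd h hat
        · exact h
      have hnd' : q'.support.Nodup := (List.nodup_cons.mp hnd).2
      by_cases hxt : x = t
      · -- whole q' is inside S
        subst hxt
        have hq'S : ∀ v ∈ q'.support, v ∈ S := by
          intro v hv
          refine hL v (List.mem_cons_of_mem _ hv) ?_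
          rintro rfl; exact (List.nodup_cons.mp hnd).1 hv
        exact Or.inr (reach_end_of_support q' S hq'S ha')
      · have hrec := reach_ends_avoid hxS q' hnd'
          (fun v hv hvx => hL v (List.mem_cons_of_mem _ hv) hvx) ha' hax
        rcases hrec with h | h
        · -- a reaches y; extend with edge y–t if possible
          rcases eq_or_ne a y with rfl | hay
          · -- a = y
            have hyS : a ∈ S := hL a (by simp) hax
            have htS : t ∈ S := hL t (by simp) (Ne.symm hxt)
            exact Or.inl (SimpleGraph.Adj.reachable
              (Gdel_adj hadj.symm (by simpa using hyS) (by simpa using htS)))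
          · have hyS : y ∈ S := by
              have := reach_del_notMem h hay.symm
              simpa using this
            have hyx : y ≠ x := by rintro rfl; exact hxS hyS
            have htS : t ∈ S := hL t (by simp) (Ne.symm hxt)
            exact Or.inl (h.trans (SimpleGraph.Adj.reachable
              (Gdel_adj hadj.symm (by simpa using hyS) (by simpa using htS))))
        · exact Or.inr h

end Segs

/-! ### Unique attachment of components to blocks -/

section KSF
variable [Fintype V] {G : SimpleGraph V}

lemma block_attach (hbg : IsBlockGraph G) {W : Set V} (hW : IsBlockOf G W)
    {x : V} (hx : x ∉ W) {w₁ w₂ u₁ u₂ : V} (hw₁ : w₁ ∈ W) (hw₂ : w₂ ∈ W)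
    (hu₁ : u₁ ∈ Vcmp G W x) (hu₂ : u₂ ∈ Vcmp G W x)
    (ha₁ : G.Adj u₁ w₁) (ha₂ : G.Adj u₂ w₂) : w₁ = w₂ := by
  classical
  by_contra hne
  have hcomp : ∀ a ∈ W, ∀ b ∈ W, a ≠ b → G.Adj a b := hbg.2 W hW
  have hCW : ∀ v ∈ Vcmp G W x, v ∉ W := fun v hv => Vcmp_mem_not_in_K hx hv
  have hu₁W : u₁ ∉ W := hCW u₁ hu₁
  have hu₂W : u₂ ∉ W := hCW u₂ hu₂
  have hreach : (Gdel G (W \ {w₁})).Reachable w₁ u₂ := by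
    refine (SimpleGraph.Adj.reachable (Gdel_adj ha₁.symm (by simp) (by simp [hu₁W]))).trans ?_
    exact (hu₁.symm.trans hu₂).mono (Gdel_mono G Set.diff_subset)
  obtain ⟨p, hp⟩ := hreach.some.toPath
  have hw₁u₂ : w₁ ≠ u₂ := by rintro rfl; exact hu₂W hw₁
  rcases hpe : p with _ | ⟨hadj, q⟩
  · exact absurd hw₁ hu₂W
  case cons t₁ =>
  rw [hpe] at hp
  have hnd : (w₁ :: q.support).Nodup := by
    have := hp.support_nodup
    rwa [SimpleGraph.Walk.support_cons] at this
  have hw₁q : w₁ ∉ q.support := (List.nodup_cons.mp hnd).1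
  have hndq : q.support.Nodup := (List.nodup_cons.mp hnd).2
  have hqW : ∀ v ∈ q.support, v ∉ W := by
    intro v hv
    have hvw₁ : v ≠ w₁ := by rintro rfl; exact hw₁q hv
    rcases support_del q v hv with rfl | h
    · intro hvW; exact (hadj.2.2) ⟨hvW, by simpa using hvw₁⟩
    · intro hvW; exact h ⟨hvW, by simpa using hvw₁⟩
  -- transfer the tail walk to G
  have hedges : ∀ e ∈ q.edges, e ∈ G.edgeSet :=
    fun e he => SimpleGraph.edgeSet_mono (Gdel_le _ _) (q.edges_subset_edgeSet he)
  set qG : G.Walk t₁ u₂ := q.transfer G hedges with hqG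
  have hsupp : qG.support = q.support := q.support_transfer hedges
  have hadj₁ : G.Adj w₁ t₁ := hadj.1
  set T : Set V := W ∪ {v | v ∈ qG.support} with hT
  have hWT : W ⊆ T := Set.subset_union_left
  have hsuppT : ∀ v ∈ qG.support, v ∈ T := fun v hv => Or.inr hv
  have ht₁ : t₁ ∈ qG.support := qG.start_mem_support
  have hu₂s : u₂ ∈ qG.support := qG.end_mem_support
  have ht₁W : t₁ ∉ W := hqW t₁ (hsupp ▸ ht₁)
  have hqWG : ∀ v ∈ qG.support, v ∉ W := fun v hv => hqW v (hsupp ▸ hv)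
  have hcard : 2 ≤ T.ncard := le_trans hW.1.1 (Set.ncard_le_ncard hWT (Set.toFinite T))
  have hnocut : HasNoCutVertex G T := by
    refine ⟨hcard, ?_, ?_⟩
    · -- plain connectivity, hub w₂
      refine induce_connected_of_reach ⟨w₁, hWT hw₁⟩ ?_
      have hhub : ∀ a ∈ T, (Gdel G Tᶜ).Reachable a w₂ := by
        rintro a (haW | haq)
        · rcases eq_or_ne a w₂ with rfl | hne'
          · exact SimpleGraph.Reachable.refl _
          · exact SimpleGraph.Adj.reachable
              (Gdel_adj (hcomp a haW w₂ hw₂ hne') (by simp [hT, haW]) (by simp [hT, hw₂]))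
        · refine (reach_end_of_support qG T hsuppT haq).trans
            (SimpleGraph.Adj.reachable (Gdel_adj ha₂ ?_ ?_))
          · simpa using hsuppT u₂ hu₂s
          · simpa using hWT hw₂
      exact fun a ha b hb => (hhub a ha).trans (hhub b hb).symm
    · -- removing any vertex xx
      intro xx hxx
      set S : Set V := T \ {xx} with hS
      have hxxS : xx ∉ S := by simp [hS]
      have hmemS : ∀ v ∈ T, v ≠ xx → v ∈ S := fun v hv hvx => ⟨hv, by simpa using hvx⟩
      -- the hub
      set hub : V := if xx = w₂ then w₁ else w₂ with hhub
      have hhubW : hub ∈ W := by rw [hhub]; split <;> assumption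
      have hhubxx : hub ≠ xx := by
        rw [hhub]; split
        · rename_i h; rw [h]; exact hne
        · rename_i h; exact fun hc => h hc.symm
      have hhubS : hub ∈ S := hmemS hub (hWT hhubW) hhubxx
      have hreachhub : ∀ a ∈ S, (Gdel G Sᶜ).Reachable a hub := by
        rintro a ⟨haT, hax'⟩
        have hax : a ≠ xx := by simpa using hax'
        rcases haT with haW | haq
        · rcases eq_or_ne a hub with rfl | hne'
          · exact SimpleGraph.Reachable.refl _
          · exact SimpleGraph.Adj.reachable (Gdel_adj (hcomp a haW hub hhubW hne')
              (by simpa using hmemS a (hWT haW) hax) (by simpa using hhubS))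
        · -- a on the chain
          by_cases hxxq : xx ∈ qG.support
          · -- removed vertex on the chain; hub = w₂ (xx ∉ W)
            have hxxW : xx ∉ W := hqWG xx hxxq
            have hubw₂ : hub = w₂ := by
              rw [hhub, if_neg]; rintro rfl; exact hxxW hw₂
            have hLS : ∀ v ∈ qG.support, v ≠ xx → v ∈ S :=
              fun v hv hvx => hmemS v (hsuppT v hv) hvx
            have hw₁S : w₁ ∈ S := hmemS w₁ (hWT hw₁) (by rintro rfl; exact hxxW hw₁)
            have hw₂S : w₂ ∈ S := hmemS w₂ (hWT hw₂) (by rintro rfl; exact hxxW hw₂)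
            have hndG : qG.support.Nodup := by rw [hsupp]; exact hndq
            rcases reach_ends_avoid hxxS qG hndG hLS haq hax with h | h
            · -- reaches t₁, go t₁ – w₁ – w₂
              have ht₁S : t₁ ∈ S := by
                rcases eq_or_ne a t₁ with rfl | hat
                · exact hmemS a (hsuppT a haq) hax
                · have := reach_del_notMem h (Ne.symm hat); simpa using this
              refine h.trans ((SimpleGraph.Adj.reachable
                (Gdel_adj hadj₁.symm (by simpa using ht₁S) (by simpa using hw₁S))).trans ?_)
              rw [hubw₂]
              exact SimpleGraph.Adj.reachable
                (Gdel_adj (hcomp w₁ hw₁ w₂ hw₂ hne) (by simpa using hw₁S) (by simpa using hw₂S))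
            · -- reaches u₂, then u₂ – w₂
              have hu₂S : u₂ ∈ S := by
                rcases eq_or_ne a u₂ with rfl | hau
                · exact hmemS a (hsuppT a haq) hax
                · have := reach_del_notMem h (Ne.symm hau); simpa using this
              rw [hubw₂]
              exact h.trans (SimpleGraph.Adj.reachable
                (Gdel_adj ha₂ (by simpa using hu₂S) (by simpa using hw₂S)))
          · -- removed vertex not on the chain: whole chain inside S
            have hLS : ∀ v ∈ qG.support, v ∈ S :=
              fun v hv => hmemS v (hsuppT v hv) (by rintro rfl; exact hxxq hv)
            by_cases hxw₂ : xx = w₂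
            · -- hub = w₁; go backwards to t₁ then w₁
              have hubw₁ : hub = w₁ := by rw [hhub, if_pos hxw₂]
              have hw₁S : w₁ ∈ S := hubw₁ ▸ hhubS
              rw [hubw₁]
              exact (reach_start_of_support qG S hLS haq).trans
                (SimpleGraph.Adj.reachable (Gdel_adj hadj₁.symm
                  (by simpa using hLS t₁ ht₁) (by simpa using hw₁S)))
            · have hubw₂ : hub = w₂ := by rw [hhub, if_neg hxw₂]
              have hw₂S : w₂ ∈ S := hubw₂ ▸ hhubS
              rw [hubw₂]
              exact (reach_end_of_support qG S hLS haq).trans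
                (SimpleGraph.Adj.reachable (Gdel_adj ha₂
                  (by simpa using hLS u₂ hu₂s) (by simpa using hw₂S)))
      have hSne : S.Nonempty := ⟨hub, hhubS⟩
      exact induce_connected_of_reach hSne
        (fun a ha b hb => (hreachhub a ha).trans (hreachhub b hb).symm)
  have hTW := hW.2 T hWT hnocut
  exact ht₁W (hTW ▸ (hsuppT t₁ ht₁))
end KSF

/-! ### From a good cut to the eigenvalue bound -/

/-- The crossing predicate for a set of vertices. -/
def crossPred (A : Set V) (e : Sym2 V) : Prop :=
  ∃ a b, e = s(a, b) ∧ a ∈ A ∧ b ∉ A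

lemma crossPred_mk {A : Set V} {x y : V} :
    crossPred A s(x, y) ↔ (x ∈ A ∧ y ∉ A) ∨ (y ∈ A ∧ x ∉ A) := by
  constructor
  · rintro ⟨a, b, he, ha, hb⟩
    rw [Sym2.eq_iff] at he
    rcases he with ⟨rfl, rfl⟩ | ⟨rfl, rfl⟩
    · exact Or.inl ⟨ha, hb⟩
    · exact Or.inr ⟨ha, hb⟩
  · rintro (⟨ha, hb⟩ | ⟨ha, hb⟩)
    · exact ⟨x, y, rfl, ha, hb⟩
    · exact ⟨y, x, Sym2.eq_swap.symm, ha, hb⟩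

section Analytic
variable [Fintype V] (G : SimpleGraph V)

open Classical in
/-- The number of edges crossing a cut. -/
noncomputable def cutCount (A : Set V) : ℕ :=
  (G.edgeSet.toFinite.toFinset.filter (crossPred A)).card

open Classical in
theorem lambda2_of_good_cut (bd : Finset V) (A : Set V)
    (h1 : 0 < (bd.filter (· ∈ A)).card) (h2 : 0 < (bd.filter (· ∉ A)).card)
    (C : ℝ) (hC : 0 ≤ C)
    (hkey : (cutCount G A : ℝ) * bd.card ^ 2 ≤
      C * ((bd.filter (· ∈ A)).card * (bd.filter (· ∉ A)).card)) :
    steklovLambda2 G bd ≤ C / bd.card := by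
  classical
  set n₁ : ℕ := (bd.filter (· ∈ A)).card with hn₁
  set n₂ : ℕ := (bd.filter (· ∉ A)).card with hn₂
  have hS : n₁ + n₂ = bd.card := by
    rw [hn₁, hn₂]
    exact Finset.card_filter_add_card_filter_not _
  set f : V → ℝ := fun x => if x ∈ A then (n₂ : ℝ) else -(n₁ : ℝ) with hf
  have hsum : ∑ x ∈ bd, f x = 0 := by
    rw [← Finset.sum_filter_add_sum_filter_not bd (· ∈ A)]
    have e1 : ∑ x ∈ bd.filter (· ∈ A), f x = n₁ * n₂ := by
      rw [Finset.sum_congr rfl (fun x hx => ?_), Finset.sum_const, nsmul_eq_mul]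
      rw [hf]; simp only []
      rw [if_pos (Finset.mem_filter.mp hx).2]
    have e2 : ∑ x ∈ bd.filter (· ∉ A), f x = n₂ * (-(n₁:ℝ)) := by
      rw [Finset.sum_congr rfl (fun x hx => ?_), Finset.sum_const, nsmul_eq_mul]
      rw [hf]; simp only []
      rw [if_neg (Finset.mem_filter.mp hx).2]
    rw [e1, e2]; ring
  have hsq : ∑ x ∈ bd, f x ^ 2 = (n₁ : ℝ) * n₂ * bd.card := by
    rw [← Finset.sum_filter_add_sum_filter_not bd (· ∈ A)]
    have e1 : ∑ x ∈ bd.filter (· ∈ A), f x ^ 2 = n₁ * (n₂:ℝ) ^ 2 := by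
      rw [Finset.sum_congr rfl (fun x hx => ?_), Finset.sum_const, nsmul_eq_mul]
      rw [hf]; simp only []
      rw [if_pos (Finset.mem_filter.mp hx).2]
    have e2 : ∑ x ∈ bd.filter (· ∉ A), f x ^ 2 = n₂ * (-(n₁:ℝ)) ^ 2 := by
      rw [Finset.sum_congr rfl (fun x hx => ?_), Finset.sum_const, nsmul_eq_mul]
      rw [hf]; simp only []
      rw [if_neg (Finset.mem_filter.mp hx).2]
    rw [e1, e2, ← hS]; push_cast; ring
  have henergy : graphEnergy G f = (cutCount G A : ℝ) * (bd.card : ℝ) ^ 2 := by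
    rw [graphEnergy]
    have hterm : ∀ e ∈ G.edgeSet.toFinite.toFinset,
        Sym2.lift ⟨fun x y => (f x - f y) ^ 2, fun _ _ => by ring⟩ e =
          if crossPred A e then ((bd.card : ℝ)) ^ 2 else 0 := by
      intro e _
      induction e with
      | _ x y =>
        simp only [Sym2.lift_mk]
        by_cases hx : x ∈ A <;> by_cases hy : y ∈ A
        · rw [if_neg (by rw [crossPred_mk]; tauto)]
          rw [hf]; simp [hx, hy]
        · rw [if_pos (by rw [crossPred_mk]; tauto)]
          rw [hf]; simp only [if_pos hx, if_neg hy, ← hS]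
          push_cast; ring
        · rw [if_pos (by rw [crossPred_mk]; tauto)]
          rw [hf]; simp only [if_neg hx, if_pos hy, ← hS]
          push_cast; ring
        · rw [if_neg (by rw [crossPred_mk]; tauto)]
          rw [hf]; simp [hx, hy]
    rw [Finset.sum_congr rfl hterm, Finset.sum_ite, Finset.sum_const, Finset.sum_const]
    rw [cutCount]
    simp only [smul_zero, add_zero, nsmul_eq_mul]
  -- the quotient is in the defining set
  have hSpos : 0 < bd.card := lt_of_lt_of_le h1 (Finset.card_le_card (Finset.filter_subset _ _))
  have hn1R : (0:ℝ) < (n₁ : ℝ) := by exact_mod_cast h1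
  have hn2R : (0:ℝ) < (n₂ : ℝ) := by exact_mod_cast h2
  have hSR : (0:ℝ) < (bd.card : ℝ) := by exact_mod_cast hSpos
  have hdenom : (0:ℝ) < (n₁ : ℝ) * n₂ * bd.card := by positivity
  have hmem : graphEnergy G f / ∑ x ∈ bd, f x ^ 2 ∈
      {r | ∃ f : V → ℝ, ∑ x ∈ bd, f x = 0 ∧ (∃ x ∈ bd, f x ≠ 0) ∧
        r = graphEnergy G f / ∑ x ∈ bd, f x ^ 2} := by
    refine ⟨f, hsum, ?_, rfl⟩
    obtain ⟨x, hx⟩ := Finset.card_pos.mp h1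
    refine ⟨x, (Finset.filter_subset _ _) hx, ?_⟩
    rw [hf]; simp only []
    rw [if_pos (Finset.mem_filter.mp hx).2]
    exact ne_of_gt hn2R
  have hbdd : BddBelow {r | ∃ f : V → ℝ, ∑ x ∈ bd, f x = 0 ∧ (∃ x ∈ bd, f x ≠ 0) ∧
      r = graphEnergy G f / ∑ x ∈ bd, f x ^ 2} := by
    refine ⟨0, ?_⟩
    rintro r ⟨g, _, _, rfl⟩
    have hE : 0 ≤ graphEnergy G g := by
      rw [graphEnergy]
      refine Finset.sum_nonneg fun e _ => ?_
      induction e with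
      | _ x y => simp only [Sym2.lift_mk]; positivity
    have hq : 0 ≤ ∑ x ∈ bd, g x ^ 2 := Finset.sum_nonneg fun x _ => sq_nonneg _
    exact div_nonneg hE hq
  refine le_trans (csInf_le hbdd hmem) ?_
  rw [henergy, hsq]
  rw [div_le_div_iff₀ hdenom hSR]
  calc (cutCount G A : ℝ) * (bd.card:ℝ) ^ 2 * (bd.card:ℝ)
      ≤ C * ((n₁:ℝ) * (n₂:ℝ)) * (bd.card:ℝ) :=
        mul_le_mul_of_nonneg_right hkey (le_of_lt hSR)
    _ = C * ((n₁:ℝ) * (n₂:ℝ) * (bd.card:ℝ)) := by ring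
end Analytic

/-! ### More component utilities -/

section Misc
variable [Fintype V] {G : SimpleGraph V}

lemma Gdel_Gdel (G : SimpleGraph V) (K K' : Set V) :
    Gdel (Gdel G K) K' = Gdel G (K ∪ K') := by
  ext x y
  show (G.Adj x y ∧ x ∉ K ∧ y ∉ K) ∧ x ∉ K' ∧ y ∉ K' ↔
    G.Adj x y ∧ x ∉ K ∪ K' ∧ y ∉ K ∪ K'
  simp only [Set.mem_union]
  tauto

lemma reach_del_eq_of_mem {K : Set V} {a b : V} (h : (Gdel G K).Reachable a b)
    (ha : a ∈ K) : b = a := by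
  obtain ⟨w⟩ := h
  cases w with
  | nil => rfl
  | cons hadj _ => exact absurd ha hadj.2.1

lemma not_mem_Vcmp_del {u z : V} (hz : z ≠ u) : u ∉ Vcmp G {u} z := by
  intro h
  exact hz (reach_del_eq_of_mem (SimpleGraph.Reachable.symm h) rfl)

lemma closed_reach {SS : Set V} (hcl : ∀ a ∈ SS, ∀ b, G.Adj a b → b ∈ SS) {a c : V}
    (h : G.Reachable a c) (ha : a ∈ SS) : c ∈ SS := by
  obtain ⟨w⟩ := h
  induction w with
  | nil => exact ha
  | cons hadj p ih => exact ih (hcl _ ha _ hadj)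

lemma attach_nbr {W : Set V} {w x : V} (hw : w ∈ W) (hxW : x ∉ W) (hxw : x ≠ w)
    (h : (Gdel G (W \ {w})).Reachable x w) :
    ∃ y, G.Adj y w ∧ y ∈ Vcmp G W x := by
  obtain ⟨y, hadjy, hr⟩ := exists_last_nbr (G := Gdel G (W \ {w})) h hxw
  rw [Gdel_Gdel] at hr
  have hKW : (W \ {w}) ∪ {w} = W := by
    rw [Set.diff_union_self, Set.union_eq_self_of_subset_right (by simpa using hw)]
  rw [hKW] at hr
  exact ⟨y, hadjy.1, hr⟩

/-- The branch of a block `W` at a vertex `w ∈ W`. -/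
def branch (G : SimpleGraph V) (W : Set V) (w : V) : Set V := Vcmp G (W \ {w}) w

lemma mem_branch_self (G : SimpleGraph V) (W : Set V) (w : V) : w ∈ branch G W w :=
  mem_Vcmp_self G _ w

lemma branch_inter_W {W : Set V} {w v : V} (hv : v ∈ branch G W w) (hvW : v ∈ W) :
    v = w := by
  rcases eq_or_ne v w with h | h
  · exact h
  · exact absurd (reach_del_notMem hv h) (by simp [hvW, h])

lemma branch_cover (hconn : G.Connected) {W : Set V} (hWne : W.Nonempty) (v : V) :
    ∃ w ∈ W, v ∈ branch G W w := by
  obtain ⟨w₀, hw₀⟩ := hWne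
  obtain ⟨p⟩ := hconn.preconnected v w₀
  obtain ⟨z, hz, hr⟩ := exists_first_hit p hw₀
  exact ⟨z, hz, hr.symm⟩

lemma branch_cut (hbg : IsBlockGraph G) {W : Set V} (hW : IsBlockOf G W) {w : V}
    (hw : w ∈ W) {a b : V} (ha : a ∈ branch G W w) (hb : b ∉ branch G W w)
    (hadj : G.Adj a b) : a = w ∧ b ∈ W ∧ b ≠ w := by
  have hbw : b ≠ w := by intro h; rw [h] at hb; exact hb (mem_branch_self G W w)
  by_cases haw : a = w
  · subst haw
    refine ⟨rfl, ?_, hbw⟩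
    by_contra hbW
    exact hb (Vcmp_closed (mem_Vcmp_self _ _ _) (mem_Vcmp_self _ _ _) hadj
      (by simp) (by simp [hbW]))
  · exfalso
    have haW : a ∉ W := fun h => haw (branch_inter_W ha h)
    obtain ⟨y, hy, hyC⟩ := attach_nbr hw haW haw (SimpleGraph.Reachable.symm ha)
    by_cases hbW : b ∈ W
    · -- a attaches to both w and b
      have hwb : w = b := block_attach hbg hW haW hw hbW hyC (mem_Vcmp_self _ _ _) hy hadj
      exact hbw hwb.symm
    · -- b is in the same component, hence in the branch
      have hbC : (Gdel G W).Reachable a b := Vcmp_closed (mem_Vcmp_self _ _ _)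
        (mem_Vcmp_self _ _ _) hadj haW hbW
      exact hb (SimpleGraph.Reachable.trans ha
        (SimpleGraph.Reachable.mono (Gdel_mono G Set.diff_subset) hbC))

lemma branch_avoid (hbg : IsBlockGraph G) {W : Set V} (hW : IsBlockOf G W) {u wst : V}
    (hu : u ∈ W) (hwst : wst ∈ W) (hne : wst ≠ u) {base : V}
    (hbase : wst ∈ Vcmp G {u} base) : branch G W u ∩ Vcmp G {u} base = ∅ := by
  have hbu : base ≠ u := by
    rintro rfl
    exact hne (reach_del_eq_of_mem hbase rfl)
  ext x
  simp only [Set.mem_inter_iff, Set.mem_empty_iff_false, iff_false, not_and]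
  intro hxb hxQ
  have hxu : x ≠ u := by rintro rfl; exact not_mem_Vcmp_del hbu hxQ
  have hxW : x ∉ W := fun h => hxu (branch_inter_W hxb h)
  obtain ⟨y, hy, hyC⟩ := attach_nbr hu hxW hxu (SimpleGraph.Reachable.symm hxb)
  -- x reaches wst avoiding u; find the first W vertex hit
  have hreach : (Gdel G {u}).Reachable x wst := (SimpleGraph.Reachable.symm hxQ).trans hbase
  obtain ⟨q⟩ := hreach
  obtain ⟨z, hzW, hr⟩ := exists_first_hit (G := Gdel G {u}) q hwst
  rw [Gdel_Gdel] at hr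
  have hzu : z ≠ u := by
    rintro rfl
    exact hxu (reach_del_eq_of_mem (SimpleGraph.Reachable.symm hr) (by simp))
  have hr' : (Gdel G (W \ {z})).Reachable x z :=
    hr.mono (Gdel_mono G (Set.subset_union_right))
  have hxz : x ≠ z := by rintro rfl; exact hxW hzW
  obtain ⟨y', hy', hy'C⟩ := attach_nbr hzW hxW hxz hr'
  have huz : u = z := block_attach hbg hW hxW hu hzW hyC hy'C hy hy'
  exact hzu huz.symm

end Misc

/-! ### Averaging: the vertex-centroid case -/

section Counting
variable [Fintype V]

open Classical in
lemma cutCount_le_comp {G : SimpleGraph V} [DecidableRel G.Adj] {u y : V} (hyu : y ≠ u) :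
    cutCount G (Vcmp G {u} y) ≤
      ((G.neighborFinset u) ∩ (Finset.univ.filter (· ∈ Vcmp G {u} y))).card := by
  classical
  rw [cutCount]
  refine le_trans (Finset.card_le_card (t :=
    ((G.neighborFinset u) ∩ (Finset.univ.filter (· ∈ Vcmp G {u} y))).image
      (fun a => s(a, u))) ?_) Finset.card_image_le
  intro e he
  rw [Finset.mem_filter] at he
  obtain ⟨heE, a, b, rfl, haA, hbA⟩ := he
  have hadj : G.Adj a b := by
    rw [Set.Finite.mem_toFinset, SimpleGraph.mem_edgeSet] at heE
    exact heE
  have hau : a ≠ u := fun h => (not_mem_Vcmp_del hyu) (h ▸ haA)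
  have hbu : b = u := by
    by_contra hbu
    exact hbA (Vcmp_closed (mem_Vcmp_self _ _ _) haA hadj (by simpa using hau)
      (by simpa using hbu))
  subst hbu
  rw [Finset.mem_image]
  exact ⟨a, by simp [SimpleGraph.mem_neighborFinset, hadj.symm, haA], rfl⟩

open Classical in
lemma good_cut_vertex {G : SimpleGraph V} [DecidableRel G.Adj] (bd : Finset V) (D Bk : ℕ)
    (hconn : G.Connected) {u : V} (hubd : u ∉ bd)
    (hcent : ∀ y, y ≠ u → 2 * (bd.filter (· ∈ Vcmp G {u} y)).card ≤ bd.card)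
    (hdeg : G.degree u ≤ D) (hD2 : 2 ≤ D) (hBk2 : 2 ≤ Bk) (hbd : 2 ≤ bd.card) :
    ∃ A : Set V, 0 < (bd.filter (· ∈ A)).card ∧ 0 < (bd.filter (· ∉ A)).card ∧
      bd.card ≤ 2 * (bd.filter (· ∉ A)).card ∧
      2 * bd.card * cutCount G A ≤ Bk ^ 2 * (D - 1) * (bd.filter (· ∈ A)).card := by
  classical
  set S := bd.card with hSdef
  set Nb := G.neighborFinset u with hNb
  set CF : V → Finset V := fun y => Finset.univ.filter (· ∈ Vcmp G {u} y) with hCF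
  set F : Finset (Finset V) := Nb.image CF with hF
  have hmemCF : ∀ y z : V, z ∈ CF y ↔ z ∈ Vcmp G {u} y := by
    intro y z
    rw [hCF]
    simp only [Finset.mem_filter, Finset.mem_univ, true_and]
  have hCFeq : ∀ y y' z : V, z ∈ CF y → z ∈ CF y' → CF y = CF y' := by
    intro y y' z hz hz'
    rw [hmemCF] at hz hz'
    have h1 : Vcmp G {u} y = Vcmp G {u} z := (Vcmp_eq_of_mem hz).symm
    have h2 : Vcmp G {u} y' = Vcmp G {u} z := (Vcmp_eq_of_mem hz').symm
    have : Vcmp G {u} y = Vcmp G {u} y' := by rw [h1, h2]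
    rw [hCF]; simp only []
    rw [this]
  have hdisj : ∀ P ∈ F, ∀ P' ∈ F, P ≠ P' → Disjoint P P' := by
    intro P hP P' hP' hne
    obtain ⟨y, _, rfl⟩ := Finset.mem_image.mp hP
    obtain ⟨y', _, rfl⟩ := Finset.mem_image.mp hP'
    rw [Finset.disjoint_left]
    intro z hz hz'
    exact hne (hCFeq y y' z hz hz')
  have hsum_e : ∑ P ∈ F, (Nb ∩ P).card ≤ Nb.card := by
    rw [← Finset.card_biUnion (fun P hP P' hP' hne =>
      Finset.disjoint_of_subset_left Finset.inter_subset_right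
        (Finset.disjoint_of_subset_right Finset.inter_subset_right (hdisj P hP P' hP' hne)))]
    exact Finset.card_le_card (Finset.biUnion_subset.mpr
      (fun P _ => Finset.inter_subset_left))
  have hcover : ∀ x ∈ bd, ∃ P ∈ F, x ∈ bd ∩ P := by
    intro x hx
    have hxu : x ≠ u := by rintro rfl; exact hubd hx
    obtain ⟨y, hyadj, hyr⟩ := exists_last_nbr (hconn.preconnected x u) hxu
    refine ⟨CF y, Finset.mem_image_of_mem CF (by
      rw [hNb, SimpleGraph.mem_neighborFinset]; exact hyadj.symm), ?_⟩
    rw [Finset.mem_inter]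
    exact ⟨hx, (hmemCF y x).mpr hyr.symm⟩
  have hsum_n : S ≤ ∑ P ∈ F, (bd ∩ P).card := by
    calc S = bd.card := rfl
      _ ≤ (F.biUnion (fun P => bd ∩ P)).card := by
          refine Finset.card_le_card ?_
          intro x hx
          rw [Finset.mem_biUnion]
          exact hcover x hx
      _ ≤ ∑ P ∈ F, (bd ∩ P).card := Finset.card_biUnion_le
  by_cases hex : ∃ P ∈ F, 2 * S * (Nb ∩ P).card ≤ Bk ^ 2 * (D - 1) * (bd ∩ P).card
  · obtain ⟨P, hPF, hkey⟩ := hex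
    obtain ⟨y, hyNb, rfl⟩ := Finset.mem_image.mp hPF
    have hyu : y ≠ u := by
      rw [hNb, SimpleGraph.mem_neighborFinset] at hyNb
      exact fun h => G.loopless.irrefl u (h ▸ hyNb)
    have hfilter : bd ∩ CF y = bd.filter (· ∈ Vcmp G {u} y) := by
      ext z
      simp only [Finset.mem_inter, Finset.mem_filter, Finset.mem_univ, true_and, hmemCF]
    have heP : 1 ≤ (Nb ∩ CF y).card := by
      refine Finset.card_pos.mpr ⟨y, ?_⟩
      rw [Finset.mem_inter]
      exact ⟨hyNb, (hmemCF y y).mpr (mem_Vcmp_self _ _ _)⟩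
    rw [hfilter] at hkey
    have hn₁pos : 0 < (bd.filter (· ∈ Vcmp G {u} y)).card := by
      by_contra h
      rw [not_lt, Nat.le_zero] at h
      rw [h, Nat.mul_zero] at hkey
      have h1 : 2 * S * 1 ≤ 2 * S * (Nb ∩ CF y).card := Nat.mul_le_mul_left _ heP
      have h2 : 2 * S * 1 ≤ 0 := le_trans h1 hkey
      rw [Nat.mul_one] at h2
      omega
    have hsplit : (bd.filter (· ∈ Vcmp G {u} y)).card +
        (bd.filter (· ∉ Vcmp G {u} y)).card = S :=
      Finset.card_filter_add_card_filter_not _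
    have hhalf : 2 * (bd.filter (· ∈ Vcmp G {u} y)).card ≤ S := hcent y hyu
    refine ⟨Vcmp G {u} y, hn₁pos, by omega, by omega, ?_⟩
    calc 2 * S * cutCount G (Vcmp G {u} y)
        ≤ 2 * S * (Nb ∩ CF y).card :=
          Nat.mul_le_mul_left _ (cutCount_le_comp hyu)
      _ ≤ Bk ^ 2 * (D - 1) * (bd.filter (· ∈ Vcmp G {u} y)).card := hkey
  · exfalso
    push_neg at hex
    have hFne : F.Nonempty := by
      have hSpos : 0 < bd.card := by omega
      obtain ⟨x, hx⟩ := Finset.card_pos.mp hSpos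
      obtain ⟨P, hPF, _⟩ := hcover x hx
      exact ⟨P, hPF⟩
    have hstep : ∀ P ∈ F, Bk ^ 2 * (D - 1) * (bd ∩ P).card + 1 ≤ 2 * S * (Nb ∩ P).card :=
      fun P hP => (hex P hP)
    have hsum := Finset.sum_le_sum hstep
    rw [Finset.sum_add_distrib, Finset.sum_const, ← Finset.mul_sum, ← Finset.mul_sum,
      smul_eq_mul, mul_one] at hsum
    have hL : Bk ^ 2 * (D - 1) * S + 1 ≤
        Bk ^ 2 * (D - 1) * (∑ P ∈ F, (bd ∩ P).card) + F.card := by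
      have h1 : Bk ^ 2 * (D - 1) * S ≤ Bk ^ 2 * (D - 1) * (∑ P ∈ F, (bd ∩ P).card) :=
        Nat.mul_le_mul_left _ hsum_n
      have h2 : 1 ≤ F.card := Finset.card_pos.mpr hFne
      omega
    have hR : 2 * S * (∑ P ∈ F, (Nb ∩ P).card) ≤ 2 * S * D := by
      refine Nat.mul_le_mul_left _ (le_trans hsum_e ?_)
      rw [hNb]
      rw [SimpleGraph.card_neighborFinset_eq_degree]
      exact hdeg
    have hcmp : 2 * S * D ≤ Bk ^ 2 * (D - 1) * S := by
      have h4 : 4 ≤ Bk ^ 2 := by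
        calc 4 = 2 ^ 2 := by norm_num
          _ ≤ Bk ^ 2 := Nat.pow_le_pow_left hBk2 2
      have h2D : 2 * D ≤ 4 * (D - 1) := by omega
      calc 2 * S * D = S * (2 * D) := by ring
        _ ≤ S * (4 * (D - 1)) := Nat.mul_le_mul_left _ h2D
        _ ≤ S * (Bk ^ 2 * (D - 1)) := Nat.mul_le_mul_left _ (Nat.mul_le_mul_right _ h4)
        _ = Bk ^ 2 * (D - 1) * S := by ring
    have hfin : Bk ^ 2 * (D - 1) * S + 1 ≤ Bk ^ 2 * (D - 1) * S :=
      le_trans hL (le_trans hsum (le_trans hR hcmp))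
    omega

end Counting

/-! ### Averaging: the block-centroid case -/

section CountingB
variable [Fintype V]

open Classical in
lemma cutCount_le_branch {G : SimpleGraph V} (hbg : IsBlockGraph G) {W : Set V}
    (hW : IsBlockOf G W) {w : V} (hw : w ∈ W) :
    cutCount G (branch G W w) ≤ W.ncard - 1 := by
  classical
  rw [cutCount]
  have hsub : G.edgeSet.toFinite.toFinset.filter (crossPred (branch G W w)) ⊆
      ((W.toFinite.toFinset.erase w).image (fun b => s(w, b))) := by
    intro e he
    rw [Finset.mem_filter] at he
    obtain ⟨heE, a, b, rfl, haA, hbA⟩ := he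
    have hadj : G.Adj a b := by
      rw [Set.Finite.mem_toFinset, SimpleGraph.mem_edgeSet] at heE
      exact heE
    obtain ⟨haw, hbW, hbw⟩ := branch_cut hbg hW hw haA hbA hadj
    subst haw
    rw [Finset.mem_image]
    exact ⟨b, by rw [Finset.mem_erase, Set.Finite.mem_toFinset]; exact ⟨hbw, hbW⟩, rfl⟩
  calc (G.edgeSet.toFinite.toFinset.filter (crossPred (branch G W w))).card
      ≤ ((W.toFinite.toFinset.erase w).image (fun b => s(w, b))).card :=
        Finset.card_le_card hsub
    _ ≤ (W.toFinite.toFinset.erase w).card := Finset.card_image_le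
    _ = W.ncard - 1 := by
        rw [Finset.card_erase_of_mem (by rw [Set.Finite.mem_toFinset]; exact hw)]
        rw [← Set.ncard_eq_toFinset_card]

open Classical in
lemma good_cut_block {G : SimpleGraph V} (bd : Finset V) (D Bk : ℕ)
    (hbg : IsBlockGraph G) {W : Set V} (hW : IsBlockOf G W)
    (hcent : ∀ w ∈ W, 2 * (bd.filter (· ∈ branch G W w)).card ≤ bd.card)
    (hBkW : W.ncard ≤ Bk) (hmono : 2 * Bk * (Bk - 1) ≤ Bk ^ 2 * (D - 1))
    (hBk2 : 2 ≤ Bk) (hbd : 2 ≤ bd.card) :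
    ∃ A : Set V, 0 < (bd.filter (· ∈ A)).card ∧ 0 < (bd.filter (· ∉ A)).card ∧
      bd.card ≤ 2 * (bd.filter (· ∉ A)).card ∧
      2 * bd.card * cutCount G A ≤ Bk ^ 2 * (D - 1) * (bd.filter (· ∈ A)).card := by
  classical
  set S := bd.card with hSdef
  set b := W.ncard with hbdef
  have hb2 : 2 ≤ b := hW.1.1
  set WF := W.toFinite.toFinset with hWF
  have hWFcard : WF.card = b := by rw [hWF, ← Set.ncard_eq_toFinset_card]
  have hWne : W.Nonempty := Set.nonempty_of_ncard_ne_zero (by omega)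
  have hcover : ∀ x ∈ bd, ∃ w ∈ WF, x ∈ bd.filter (· ∈ branch G W w) := by
    intro x hx
    obtain ⟨w, hwW, hwb⟩ := branch_cover hbg.1 hWne x
    exact ⟨w, by rw [hWF, Set.Finite.mem_toFinset]; exact hwW,
      by rw [Finset.mem_filter]; exact ⟨hx, hwb⟩⟩
  have hsum_n : S ≤ ∑ w ∈ WF, (bd.filter (· ∈ branch G W w)).card := by
    calc S = bd.card := rfl
      _ ≤ (WF.biUnion (fun w => bd.filter (· ∈ branch G W w))).card := by
          refine Finset.card_le_card ?_
          intro x hx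
          rw [Finset.mem_biUnion]
          exact hcover x hx
      _ ≤ _ := Finset.card_biUnion_le
  by_cases hex : ∃ w ∈ WF, 2 * S * (b - 1) ≤ Bk ^ 2 * (D - 1) * (bd.filter (· ∈ branch G W w)).card
  · obtain ⟨w, hwWF, hkey⟩ := hex
    have hwW : w ∈ W := by rw [hWF, Set.Finite.mem_toFinset] at hwWF; exact hwWF
    have hn₁pos : 0 < (bd.filter (· ∈ branch G W w)).card := by
      by_contra h
      rw [not_lt, Nat.le_zero] at h
      rw [h, Nat.mul_zero] at hkey
      have : 2 * S * 1 ≤ 2 * S * (b - 1) := Nat.mul_le_mul_left _ (by omega)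
      omega
    have hsplit : (bd.filter (· ∈ branch G W w)).card +
        (bd.filter (· ∉ branch G W w)).card = S :=
      Finset.card_filter_add_card_filter_not _
    have hhalf : 2 * (bd.filter (· ∈ branch G W w)).card ≤ S := hcent w hwW
    refine ⟨branch G W w, hn₁pos, by omega, by omega, ?_⟩
    calc 2 * S * cutCount G (branch G W w)
        ≤ 2 * S * (b - 1) := Nat.mul_le_mul_left _ (cutCount_le_branch hbg hW hwW)
      _ ≤ Bk ^ 2 * (D - 1) * (bd.filter (· ∈ branch G W w)).card := hkey
  · exfalso
    push_neg at hex
    have hstep : ∀ w ∈ WF,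
        Bk ^ 2 * (D - 1) * (bd.filter (· ∈ branch G W w)).card + 1 ≤ 2 * S * (b - 1) :=
      fun w hw => hex w hw
    have hsum := Finset.sum_le_sum hstep
    rw [Finset.sum_add_distrib, Finset.sum_const, ← Finset.mul_sum, Finset.sum_const,
      smul_eq_mul, mul_one, smul_eq_mul, hWFcard] at hsum
    have hL : Bk ^ 2 * (D - 1) * S + b ≤ b * (2 * S * (b - 1)) := by
      have h1 : Bk ^ 2 * (D - 1) * S ≤
          Bk ^ 2 * (D - 1) * (∑ w ∈ WF, (bd.filter (· ∈ branch G W w)).card) :=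
        Nat.mul_le_mul_left _ hsum_n
      omega
    have hR : b * (2 * S * (b - 1)) ≤ Bk ^ 2 * (D - 1) * S := by
      have h1 : 2 * b * (b - 1) ≤ 2 * Bk * (Bk - 1) :=
        Nat.mul_le_mul (Nat.mul_le_mul_left _ hBkW) (by omega)
      calc b * (2 * S * (b - 1)) = S * (2 * b * (b - 1)) := by ring
        _ ≤ S * (2 * Bk * (Bk - 1)) := Nat.mul_le_mul_left _ h1
        _ ≤ S * (Bk ^ 2 * (D - 1)) := Nat.mul_le_mul_left _ hmono
        _ = Bk ^ 2 * (D - 1) * S := by ring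
    omega

end CountingB

/-! ### Finding the centroid and the good cut -/

section Centroid
variable [Fintype V]

open Classical in
lemma cutCount_singleton_le {G : SimpleGraph V} [DecidableRel G.Adj] (a : V) :
    cutCount G {a} ≤ G.degree a := by
  classical
  rw [cutCount, ← SimpleGraph.card_neighborFinset_eq_degree]
  refine le_trans (Finset.card_le_card (t :=
    (G.neighborFinset a).image (fun b => s(a, b))) ?_) Finset.card_image_le
  intro e he
  rw [Finset.mem_filter] at he
  obtain ⟨heE, x, y, rfl, hx, hy⟩ := he
  have hadj : G.Adj x y := by
    rw [Set.Finite.mem_toFinset, SimpleGraph.mem_edgeSet] at heE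
    exact heE
  rw [Set.mem_singleton_iff] at hx
  subst hx
  rw [Finset.mem_image]
  exact ⟨y, by rw [SimpleGraph.mem_neighborFinset]; exact hadj, rfl⟩

/-- If `u` is a leaf with neighbour `nb`, every other vertex reaches `nb` avoiding `u`. -/
lemma leaf_comp {G : SimpleGraph V} [DecidableRel G.Adj] (hconn : G.Connected) {u nb : V}
    (hdeg : G.degree u = 1) (hnb : G.Adj u nb) {x : V} (hx : x ≠ u) :
    (Gdel G {u}).Reachable nb x := by
  classical
  have hNbs : G.neighborFinset u = {nb} := by
    refine Finset.eq_singleton_iff_unique_mem.mpr ⟨?_, ?_⟩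
    · rw [SimpleGraph.mem_neighborFinset]; exact hnb
    · intro y hy
      have h1 : ({y} : Finset V) ⊆ G.neighborFinset u := by
        intro t ht; rw [Finset.mem_singleton] at ht; subst ht; exact hy
      have := SimpleGraph.card_neighborFinset_eq_degree G u
      rw [hdeg] at this
      have h2 := Finset.eq_of_subset_of_card_le h1 (by rw [this]; simp)
      have h3 : nb ∈ ({y} : Finset V) := by
        rw [h2, SimpleGraph.mem_neighborFinset]; exact hnb
      exact (Finset.mem_singleton.mp h3).symm
  have hune : u ≠ nb := G.ne_of_adj hnb
  obtain ⟨p⟩ := hconn.preconnected x nb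
  obtain ⟨z, hz, hr⟩ := exists_first_hit p (show nb ∈ ({u, nb} : Set V) by simp)
  rcases hz with hzz | hzz
  · exfalso
    subst hzz
    have hKd : (({z, nb} : Set V) \ {z}) = {nb} := by
      ext t
      simp only [Set.mem_diff, Set.mem_insert_iff, Set.mem_singleton_iff]
      constructor
      · rintro ⟨rfl | rfl, ht⟩
        · exact absurd rfl ht
        · rfl
      · rintro rfl
        exact ⟨Or.inr rfl, fun h => hune h.symm⟩
    rw [hKd] at hr
    obtain ⟨y, hyadj, _⟩ := exists_last_nbr (G := Gdel G {nb}) hr hx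
    have hyN : y ∈ G.neighborFinset z := by
      rw [SimpleGraph.mem_neighborFinset]; exact hyadj.1.symm
    rw [hNbs, Finset.mem_singleton] at hyN
    exact hyadj.2.1 (by simpa using hyN)
  · subst hzz
    have hKd : (({u, z} : Set V) \ {z}) = {u} := by
      ext t
      simp only [Set.mem_diff, Set.mem_insert_iff, Set.mem_singleton_iff]
      constructor
      · rintro ⟨rfl | rfl, ht⟩
        · rfl
        · exact absurd rfl ht
      · rintro rfl
        exact ⟨Or.inl rfl, hune⟩
    rw [hKd] at hr
    exact hr.symm

open Classical in
lemma exists_good_cut {G : SimpleGraph V} [DecidableRel G.Adj] (bd : Finset V) (D Bk : ℕ)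
    (hbg : IsBlockGraph G) (hV : 3 ≤ Fintype.card V)
    (hleaf : ∀ x ∈ bd, G.degree x = 1) (hbd : 2 ≤ bd.card)
    (hD : G.maxDegree = D)
    (hBk : ∀ S : Set V, IsBlockOf G S → S.ncard ≤ Bk)
    (hBk' : ∃ S : Set V, IsBlockOf G S ∧ S.ncard = Bk) :
    2 ≤ D ∧ ∃ A : Set V, 0 < (bd.filter (· ∈ A)).card ∧ 0 < (bd.filter (· ∉ A)).card ∧
      bd.card ≤ 2 * (bd.filter (· ∉ A)).card ∧
      2 * bd.card * cutCount G A ≤ Bk ^ 2 * (D - 1) * (bd.filter (· ∈ A)).card := by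
  classical
  have hconn : G.Connected := hbg.1
  set S := bd.card with hSdef
  -- a leaf and its neighbour
  obtain ⟨x₀, hx₀⟩ := Finset.card_pos.mp (by omega : 0 < bd.card)
  have hdx₀ : G.degree x₀ = 1 := hleaf x₀ hx₀
  obtain ⟨u₀, hu₀⟩ : ∃ u₀, G.Adj x₀ u₀ := by
    rw [← SimpleGraph.degree_pos_iff_exists_adj]
    omega
  -- the neighbour of a leaf has degree at least 2
  have hdu₀ : 2 ≤ G.degree u₀ := by
    by_contra hlt
    have hd1 : G.degree u₀ = 1 := by
      have : 0 < G.degree u₀ := SimpleGraph.degree_pos_iff_exists_adj G u₀ |>.mpr ⟨x₀, hu₀.symm⟩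
      omega
    -- then {x₀, u₀} is closed under adjacency
    have hNx : G.neighborFinset x₀ = {u₀} := by
      refine Finset.eq_singleton_iff_unique_mem.mpr ⟨?_, ?_⟩
      · rw [SimpleGraph.mem_neighborFinset]; exact hu₀
      · intro y hy
        have h1 : ({y} : Finset V) ⊆ G.neighborFinset x₀ := by
          intro t ht; rw [Finset.mem_singleton] at ht; subst ht; exact hy
        have hdd := SimpleGraph.card_neighborFinset_eq_degree G x₀
        rw [hdx₀] at hdd
        have h2 := Finset.eq_of_subset_of_card_le h1 (by rw [hdd]; simp)
        have h3 : u₀ ∈ ({y} : Finset V) := by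
          rw [h2, SimpleGraph.mem_neighborFinset]; exact hu₀
        exact (Finset.mem_singleton.mp h3).symm
    have hNu : G.neighborFinset u₀ = {x₀} := by
      refine Finset.eq_singleton_iff_unique_mem.mpr ⟨?_, ?_⟩
      · rw [SimpleGraph.mem_neighborFinset]; exact hu₀.symm
      · intro y hy
        have h1 : ({y} : Finset V) ⊆ G.neighborFinset u₀ := by
          intro t ht; rw [Finset.mem_singleton] at ht; subst ht; exact hy
        have hdd := SimpleGraph.card_neighborFinset_eq_degree G u₀
        rw [hd1] at hdd
        have h2 := Finset.eq_of_subset_of_card_le h1 (by rw [hdd]; simp)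
        have h3 : x₀ ∈ ({y} : Finset V) := by
          rw [h2, SimpleGraph.mem_neighborFinset]; exact hu₀.symm
        exact (Finset.mem_singleton.mp h3).symm
    have hcl : ∀ a ∈ ({x₀, u₀} : Set V), ∀ b, G.Adj a b → b ∈ ({x₀, u₀} : Set V) := by
      rintro a (rfl | rfl) b hab
      · have : b ∈ G.neighborFinset a := by rw [SimpleGraph.mem_neighborFinset]; exact hab
        rw [hNx, Finset.mem_singleton] at this
        simp [this]
      · have : b ∈ G.neighborFinset a := by rw [SimpleGraph.mem_neighborFinset]; exact hab
        rw [hNu, Finset.mem_singleton] at this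
        simp [this]
    have huniv : (Set.univ : Set V) ⊆ {x₀, u₀} := by
      intro v _
      exact closed_reach hcl (hconn.preconnected x₀ v) (by simp)
    have hle := Set.ncard_le_ncard huniv (Set.toFinite _)
    rw [Set.ncard_univ, Nat.card_eq_fintype_card] at hle
    have : ({x₀, u₀} : Set V).ncard ≤ 2 := le_trans (Set.ncard_insert_le _ _) (by simp)
    omega
  have hD2 : 2 ≤ D := by
    rw [← hD]
    exact le_trans hdu₀ (SimpleGraph.degree_le_maxDegree G u₀)
  have hBk2 : 2 ≤ Bk := by
    obtain ⟨W, hW, hcard⟩ := hBk'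
    rw [← hcard]
    exact hW.1.1
  -- if D = 2 then Bk = 2
  have hmono : 2 * Bk * (Bk - 1) ≤ Bk ^ 2 * (D - 1) := by
    by_cases hD3 : 3 ≤ D
    · calc 2 * Bk * (Bk - 1) ≤ Bk * Bk * 2 := by
            have : Bk - 1 ≤ Bk := by omega
            calc 2 * Bk * (Bk - 1) = Bk * (Bk - 1) * 2 := by ring
              _ ≤ Bk * Bk * 2 := Nat.mul_le_mul_right _ (Nat.mul_le_mul_left _ this)
        _ = Bk ^ 2 * 2 := by ring
        _ ≤ Bk ^ 2 * (D - 1) := Nat.mul_le_mul_left _ (by omega)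
    · -- D = 2; show Bk ≤ 2
      have hDeq : D = 2 := by omega
      have hBkle : Bk ≤ 2 := by
        by_contra hBk3
        obtain ⟨W, hW, hcard⟩ := hBk'
        have hx₀W : x₀ ∉ W := by
          intro hx₀W
          -- x₀ would have ≥ 2 neighbours inside the complete block W
          have h3 : 3 ≤ W.ncard := by omega
          obtain ⟨a, ha, hax⟩ := Set.exists_ne_of_one_lt_ncard (s := W) (by omega) x₀
          obtain ⟨b, hb, hba, hbx⟩ : ∃ b ∈ W, b ≠ a ∧ b ≠ x₀ := by
            obtain ⟨c, hc, hca⟩ := Set.exists_ne_of_one_lt_ncard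
              (show 1 < (W \ {a}).ncard by
                rw [Set.ncard_diff (by simpa using ha) (Set.toFinite _)]
                simp
                omega) x₀
            exact ⟨c, (Set.diff_subset) hc, by simpa using ((Set.mem_diff c).mp hc).2, hca⟩
          have hsub : ({a, b} : Finset V) ⊆ G.neighborFinset x₀ := by
            intro t ht
            rw [Finset.mem_insert, Finset.mem_singleton] at ht
            rw [SimpleGraph.mem_neighborFinset]
            rcases ht with rfl | rfl
            · exact (hbg.2 W hW x₀ hx₀W t ha (Ne.symm hax)).symm.symm
            · exact (hbg.2 W hW x₀ hx₀W t hb (Ne.symm hbx)).symm.symm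
          have hc2 : ({a, b} : Finset V).card = 2 := by
            rw [Finset.card_insert_of_notMem (by simp [Ne.symm hba]), Finset.card_singleton]
          have := Finset.card_le_card hsub
          rw [hc2, SimpleGraph.card_neighborFinset_eq_degree, hdx₀] at this
          omega
        -- find a vertex of W with a neighbour outside W
        obtain ⟨wv, hwv⟩ : W.Nonempty := Set.nonempty_of_ncard_ne_zero (by omega)
        obtain ⟨p⟩ := hconn.preconnected x₀ wv
        obtain ⟨z, hzW, hr⟩ := exists_first_hit p hwv
        have hxz : x₀ ≠ z := by rintro rfl; exact hx₀W hzW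
        obtain ⟨y, hyadj, _⟩ := exists_last_nbr (G := Gdel G (W \ {z})) hr hxz
        have hyW : y ∉ W := by
          intro hyW
          have h1 := hyadj.2.1
          have hyz : y ≠ z := (G.ne_of_adj hyadj.1)
          exact h1 ⟨hyW, by simpa using hyz⟩
        -- z has Bk - 1 + 1 neighbours
        have hsub : insert y ((W.toFinite.toFinset).erase z) ⊆ G.neighborFinset z := by
          intro t ht
          rw [Finset.mem_insert] at ht
          rw [SimpleGraph.mem_neighborFinset]
          rcases ht with rfl | ht
          · exact hyadj.1.symm
          · rw [Finset.mem_erase, Set.Finite.mem_toFinset] at ht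
            exact (hbg.2 W hW z hzW t ht.2 (Ne.symm ht.1)).symm.symm
        have hycard : (insert y ((W.toFinite.toFinset).erase z)).card = Bk := by
          rw [Finset.card_insert_of_notMem (by
            rw [Finset.mem_erase, Set.Finite.mem_toFinset]
            rintro ⟨_, h⟩; exact hyW h)]
          rw [Finset.card_erase_of_mem (by rw [Set.Finite.mem_toFinset]; exact hzW)]
          rw [← Set.ncard_eq_toFinset_card, hcard]
          omega
        have hdz := Finset.card_le_card hsub
        rw [hycard, SimpleGraph.card_neighborFinset_eq_degree] at hdz
        have := SimpleGraph.degree_le_maxDegree G z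
        rw [hD] at this
        omega
      have hBkeq : Bk = 2 := by omega
      rw [hBkeq, hDeq]
      norm_num
  -- the case S = 2
  by_cases hS2 : S ≤ 2
  · have hSeq : S = 2 := by omega
    have hsplit : (bd.filter (· ∈ ({x₀} : Set V))).card +
        (bd.filter (· ∉ ({x₀} : Set V))).card = S :=
      Finset.card_filter_add_card_filter_not _
    have hn₁ : (bd.filter (· ∈ ({x₀} : Set V))).card = 1 := by
      have : bd.filter (· ∈ ({x₀} : Set V)) = {x₀} := by
        ext t
        rw [Finset.mem_filter, Finset.mem_singleton]
        simp only [Set.mem_singleton_iff]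
        constructor
        · rintro ⟨_, rfl⟩; rfl
        · rintro rfl; exact ⟨hx₀, rfl⟩
      rw [this, Finset.card_singleton]
    refine ⟨hD2, {x₀}, by convert (show 0 < (bd.filter (· ∈ ({x₀} : Set V))).card by omega),
      by convert (show 0 < (bd.filter (· ∉ ({x₀} : Set V))).card by omega),
      by convert (show S ≤ 2 * (bd.filter (· ∉ ({x₀} : Set V))).card by omega), ?_⟩
    have hcut : cutCount G ({x₀} : Set V) ≤ 1 := by
      have := cutCount_singleton_le (G := G) x₀
      rw [hdx₀] at this
      exact this
    have h4 : 4 ≤ Bk ^ 2 * (D - 1) := by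
      have : 2 ^ 2 ≤ Bk ^ 2 := Nat.pow_le_pow_left hBk2 2
      have h1 : 1 ≤ D - 1 := by omega
      calc 4 = 2 ^ 2 * 1 := by norm_num
        _ ≤ Bk ^ 2 * (D - 1) := Nat.mul_le_mul this h1
    calc 2 * S * cutCount G ({x₀} : Set V) ≤ 2 * 2 * 1 := by
          rw [hSeq]; exact Nat.mul_le_mul_left _ hcut
      _ = 4 := by norm_num
      _ ≤ Bk ^ 2 * (D - 1) * 1 := by omega
      _ = Bk ^ 2 * (D - 1) * (bd.filter (· ∈ ({x₀} : Set V))).card := by rw [hn₁]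
  -- now S ≥ 3
  have hS3 : 3 ≤ S := by omega
  set hv : Set (V × V) :=
    {p | p.2 ≠ p.1 ∧ S < 2 * (bd.filter (· ∈ Vcmp G {p.1} p.2)).card} with hhv
  by_cases hvne : hv.Nonempty
  · -- minimal heavy component
    obtain ⟨⟨v, y₀⟩, hpmem, hpmin⟩ := Set.Finite.exists_minimalFor
      (fun p => (Vcmp G {p.1} p.2).ncard) hv (Set.toFinite hv) hvne
    obtain ⟨hy₀v, hheavy⟩ := hpmem
    set C : Set V := Vcmp G {v} y₀ with hC
    -- neighbour of v inside C
    obtain ⟨y₁, hy₁adj, hy₁r⟩ := exists_last_nbr (hconn.preconnected y₀ v) hy₀v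
    have hy₁C : y₁ ∈ C := hy₁r
    have hy₁v : y₁ ≠ v := G.ne_of_adj hy₁adj
    obtain ⟨W, hW, hy₁W, hvW⟩ := exists_block_of_edge hy₁adj
    have hWC : ∀ w ∈ W, w ≠ v → w ∈ C := by
      intro w hwW hwv
      rcases eq_or_ne w y₁ with rfl | hwy₁
      · exact hy₁C
      · exact Vcmp_closed (mem_Vcmp_self _ _ _) hy₁C
          (hbg.2 W hW y₁ hy₁W w hwW (Ne.symm hwy₁)) (by simpa using hy₁v)
          (by simpa using hwv)
    by_cases hex2 : ∃ u ∈ W, ∀ z, z ≠ u →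
        2 * (bd.filter (· ∈ Vcmp G {u} z)).card ≤ S
    · -- vertex centroid
      obtain ⟨u, huW, hcent⟩ := hex2
      have hubd : u ∉ bd := by
        intro hubd
        have hdu : G.degree u = 1 := hleaf u hubd
        obtain ⟨nb, hnb⟩ : ∃ nb, G.Adj u nb := by
          rw [← SimpleGraph.degree_pos_iff_exists_adj]; omega
        have hnbu : nb ≠ u := (G.ne_of_adj hnb).symm
        have hsub2 : bd.filter (· ≠ u) ⊆ bd.filter (· ∈ Vcmp G {u} nb) := by
          intro t ht
          rw [Finset.mem_filter] at ht ⊢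
          exact ⟨ht.1, (leaf_comp hconn hdu hnb ht.2)⟩
        have hcard2 : S - 1 ≤ (bd.filter (· ∈ Vcmp G {u} nb)).card := by
          refine le_trans ?_ (Finset.card_le_card hsub2)
          have : bd.filter (· ≠ u) = bd.erase u := by
            ext t
            rw [Finset.mem_filter, Finset.mem_erase]
            tauto
          rw [this, Finset.card_erase_of_mem hubd]
        have := hcent nb hnbu
        omega
      exact ⟨hD2, good_cut_vertex bd D Bk hconn hubd hcent
        (by rw [← hD]; exact SimpleGraph.degree_le_maxDegree G u) hD2 hBk2 hbd⟩
    · -- block centroid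
      push_neg at hex2
      have hcent : ∀ w ∈ W, 2 * (bd.filter (· ∈ branch G W w)).card ≤ S := by
        intro w hwW
        -- find the heavy component at w, which must contain v (or w = v)
        have key : ∃ Q : Set V, (branch G W w) ∩ Q = ∅ ∧
            S < 2 * (bd.filter (· ∈ Q)).card := by
          rcases eq_or_ne w v with rfl | hwv
          · -- w = v : use C itself
            exact ⟨C, branch_avoid hbg hW hvW hy₁W hy₁v hy₁C, hheavy⟩
          · obtain ⟨z, hzw, hzheavy⟩ := hex2 w hwW
            set Q : Set V := Vcmp G {w} z with hQ
            have hvQ : v ∈ Q := by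
              by_contra hvQ
              -- Q is strictly smaller than C: contradiction with minimality
              have hQsub : Q ⊆ C \ {w} := by
                intro x hxQ
                have hxw : x ≠ w := by
                  rintro rfl; exact not_mem_Vcmp_del hzw hxQ
                have hxv : x ≠ v := by rintro rfl; exact hvQ hxQ
                -- x reaches w avoiding v
                obtain ⟨p⟩ := hconn.preconnected x v
                obtain ⟨z', hz', hr⟩ := exists_first_hit p
                  (show v ∈ ({w, v} : Set V) by simp)
                have hxC : x ∈ C := by
                  rcases hz' with rfl | rfl
                  · -- z' = w : x reaches w avoiding v
                    have hKd : ({z', v} : Set V) \ {z'} = {v} := by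
                      ext t
                      simp only [Set.mem_diff, Set.mem_insert_iff, Set.mem_singleton_iff]
                      constructor
                      · rintro ⟨rfl | rfl, ht⟩
                        · exact absurd rfl ht
                        · rfl
                      · rintro rfl
                        exact ⟨Or.inr rfl, fun h => hwv h.symm⟩
                    rw [hKd] at hr
                    have hwC : z' ∈ C := hWC z' hwW hwv
                    exact SimpleGraph.Reachable.trans
                      (show (Gdel G {v}).Reachable y₀ z' from hwC) hr.symm
                  · -- z' = v : then v would be in Q
                    exfalso
                    have hKd : ({w, z'} : Set V) \ {z'} = {w} := by
                      ext t
                      simp only [Set.mem_diff, Set.mem_insert_iff, Set.mem_singleton_iff]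
                      constructor
                      · rintro ⟨rfl | rfl, ht⟩
                        · rfl
                        · exact absurd rfl ht
                      · rintro rfl
                        exact ⟨Or.inl rfl, fun h => hwv h⟩
                    rw [hKd] at hr
                    have : z' ∈ Vcmp G {w} x := hr
                    have hQx : Vcmp G {w} x = Q := Vcmp_eq_of_mem hxQ
                    rw [hQx] at this
                    exact hvQ this
                exact ⟨hxC, by simpa using hxw⟩
              have hwC : w ∈ C := hWC w hwW hwv
              have hQC : Q ⊂ C := by
                refine ⟨le_trans hQsub Set.diff_subset, ?_⟩
                intro hCQ
                exact ((hQsub (hCQ hwC)).2 : w ∉ ({w} : Set V)) rfl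
              have hlt : Q.ncard < C.ncard := Set.ncard_lt_ncard hQC (Set.toFinite C)
              have := hpmin (j := (w, z)) ⟨hzw, hzheavy⟩ (le_of_lt hlt)
              change C.ncard ≤ Q.ncard at this
              omega
            exact ⟨Q, branch_avoid hbg hW hwW hvW (Ne.symm hwv) hvQ, hzheavy⟩
        obtain ⟨Q, hdisjQ, hQheavy⟩ := key
        have hdisjF : Disjoint (bd.filter (· ∈ branch G W w)) (bd.filter (· ∈ Q)) := by
          rw [Finset.disjoint_left]
          intro t ht ht'
          rw [Finset.mem_filter] at ht ht'
          have : t ∈ (branch G W w) ∩ Q := ⟨ht.2, ht'.2⟩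
          rw [hdisjQ] at this
          exact this
        have hsum2 : (bd.filter (· ∈ branch G W w)).card + (bd.filter (· ∈ Q)).card ≤ S := by
          rw [← Finset.card_union_of_disjoint hdisjF]
          exact Finset.card_le_card (Finset.union_subset
            (Finset.filter_subset _ _) (Finset.filter_subset _ _))
        omega
      exact ⟨hD2, good_cut_block bd D Bk hbg hW hcent (hBk W hW) hmono hBk2 hbd⟩
  · -- no heavy pair at all: u₀ is a vertex centroid
    have hu₀bd : u₀ ∉ bd := by
      intro h
      have := hleaf u₀ h
      omega
    refine ⟨hD2, good_cut_vertex bd D Bk hconn hu₀bd ?_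
      (by rw [← hD]; exact SimpleGraph.degree_le_maxDegree G u₀) hD2 hBk2 hbd⟩
    intro y hy
    by_contra hlt
    rw [not_le] at hlt
    exact hvne ⟨(u₀, y), hy, hlt⟩
end Centroid


/-- For a block graph with maximum degree `D` and maximum block size `B`,
`λ₂ ≤ B² (D - 1) / |δΩ|`. -/
theorem lambda2_block_graph_deg [Fintype V] (G : SimpleGraph V) [DecidableRel G.Adj]
    (bd : Finset V) (D Bk : ℕ)
    (hblock : IsBlockGraph G) (hV : 3 ≤ Fintype.card V)
    (hleaf : ∀ x ∈ bd, G.degree x = 1) (hbd : 2 ≤ bd.card)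
    (hD : G.maxDegree = D)
    (hBk : ∀ S : Set V, IsBlockOf G S → S.ncard ≤ Bk)
    (hBk' : ∃ S : Set V, IsBlockOf G S ∧ S.ncard = Bk) :
    steklovLambda2 G bd ≤ (Bk : ℝ) ^ 2 * ((D : ℝ) - 1) / bd.card := by
  classical
  obtain ⟨hD2, A, h1, h2, h3, h4⟩ :=
    exists_good_cut bd D Bk hblock hV hleaf hbd hD hBk hBk'
  have h1D : (1 : ℝ) ≤ (D : ℝ) := by exact_mod_cast (by omega : 1 ≤ D)
  have hC0 : (0:ℝ) ≤ (Bk : ℝ) ^ 2 * ((D : ℝ) - 1) := by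
    have : (0:ℝ) ≤ (Bk:ℝ) ^ 2 := by positivity
    nlinarith
  refine lambda2_of_good_cut G bd A h1 h2 _ hC0 ?_
  have hcast : ((D - 1 : ℕ) : ℝ) = (D : ℝ) - 1 := by
    rw [Nat.cast_sub (by omega : 1 ≤ D)]
    norm_num
  have hr4 : (2 * bd.card * cutCount G A : ℝ) ≤
      (Bk:ℝ) ^ 2 * ((D:ℝ) - 1) * ((bd.filter (· ∈ A)).card : ℝ) := by
    rw [← hcast]
    exact_mod_cast h4
  have hr3 : (bd.card : ℝ) ≤ 2 * ((bd.filter (· ∉ A)).card : ℝ) := by exact_mod_cast h3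
  have hcut0 : (0:ℝ) ≤ (cutCount G A : ℝ) := by positivity
  have hS0 : (0:ℝ) ≤ (bd.card : ℝ) := by positivity
  have hn₁0 : (0:ℝ) ≤ ((bd.filter (· ∈ A)).card : ℝ) := by positivity
  push_cast at hr4
  calc (cutCount G A : ℝ) * (bd.card : ℝ) ^ 2
      = ((cutCount G A : ℝ) * (bd.card : ℝ)) * (bd.card : ℝ) := by ring
    _ ≤ ((cutCount G A : ℝ) * (bd.card : ℝ)) *
        (2 * ((bd.filter (· ∉ A)).card : ℝ)) := by
        refine mul_le_mul_of_nonneg_left hr3 ?_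
        positivity
    _ = (2 * (bd.card : ℝ) * (cutCount G A : ℝ)) * ((bd.filter (· ∉ A)).card : ℝ) := by
        ring
    _ ≤ ((Bk:ℝ) ^ 2 * ((D:ℝ) - 1) * ((bd.filter (· ∈ A)).card : ℝ)) *
        ((bd.filter (· ∉ A)).card : ℝ) := by
        refine mul_le_mul_of_nonneg_right ?_ (by positivity)
        linarith [hr4]
    _ = (Bk:ℝ) ^ 2 * ((D:ℝ) - 1) *
        (((bd.filter (· ∈ A)).card : ℝ) * ((bd.filter (· ∉ A)).card : ℝ)) := by ring
end

section
/- Let H be a finite simple connected graph with at least 2 vertices having a vertex w of degree 1. Let G be the graph obtained from H by adding two new vertices u and v, each adjacent only to w, and set δΩ = {u, v}. Then λ₂(G, δΩ) = 1. (In particular, since H may be an arbitrarily large planar graph of maximum degree 3, there is no upper bound of the form λ₂ ≤ c·D/|V| for planar graphs.) -/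
open Finset

variable {V : Type*}

/-- The graph obtained from `H` by adding two new pendant vertices, each adjacent
only to the vertex `w`. -/
def addTwoPendants (H : SimpleGraph V) (w : V) : SimpleGraph (V ⊕ Fin 2) where
  Adj x y :=
    match x, y with
    | .inl a, .inl b => H.Adj a b
    | .inl a, .inr _ => a = w
    | .inr _, .inl a => a = w
    | .inr _, .inr _ => False
  symm := by
    refine ⟨?_⟩
    rintro (a | i) (b | j) h
    · exact H.adj_symm h
    · exact h
    · exact h
    · exact h
  loopless := by
    refine ⟨?_⟩
    rintro (a | i) h
    · exact H.irrefl h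
    · exact h

lemma lift_sq_nonneg {W : Type*} (f : W → ℝ) (e : Sym2 W) :
    0 ≤ Sym2.lift ⟨fun x y => (f x - f y) ^ 2, fun _ _ => by ring⟩ e := by
  induction e using Sym2.ind with
  | _ x y => simp [Sym2.lift_mk]; positivity

/-- Attaching two pendant vertices `u, v` to a vertex `w` of degree one in a connected
graph `H` and taking `δΩ = {u, v}` yields `λ₂ = 1`. -/
theorem lambda2_cherry [Fintype V] [DecidableEq V] (H : SimpleGraph V) [DecidableRel H.Adj]
    (hconn : H.Connected) (hV : 2 ≤ Fintype.card V) (w : V) (hw : H.degree w = 1) :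
    steklovLambda2 (addTwoPendants H w)
      ({Sum.inr 0, Sum.inr 1} : Finset (V ⊕ Fin 2)) = 1 := by
  classical
  set G := addTwoPendants H w with hG
  have h01 : (Sum.inr 0 : V ⊕ Fin 2) ≠ Sum.inr 1 := by
    simp [Fin.ext_iff]
  set e1 : Sym2 (V ⊕ Fin 2) := s(Sum.inl w, Sum.inr 0) with he1def
  set e2 : Sym2 (V ⊕ Fin 2) := s(Sum.inl w, Sum.inr 1) with he2def
  have he1 : e1 ∈ G.edgeSet := by
    show G.Adj (Sum.inl w) (Sum.inr 0)
    show w = w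
    rfl
  have he2 : e2 ∈ G.edgeSet := by
    show G.Adj (Sum.inl w) (Sum.inr 1)
    show w = w
    rfl
  have he12 : e1 ≠ e2 := by
    simp [he1def, he2def, Sym2.mk_eq_mk_iff, Prod.ext_iff, Fin.ext_iff]
  -- the witness function
  set f₀ : V ⊕ Fin 2 → ℝ := Sum.elim 0 (fun i => if i = 0 then 1 else -1) with hf₀
  have hE₀ : graphEnergy G f₀ = 2 := by
    unfold graphEnergy
    rw [← Finset.sum_subset (s₁ := ({e1, e2} : Finset (Sym2 (V ⊕ Fin 2))))]
    · rw [Finset.sum_pair he12]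
      simp [he1def, he2def, Sym2.lift_mk, hf₀]
      norm_num
    · intro e he
      simp only [Finset.mem_insert, Finset.mem_singleton] at he
      rw [Set.Finite.mem_toFinset]
      rcases he with h | h <;> subst h <;> assumption
    · intro e heE hne
      rw [Set.Finite.mem_toFinset] at heE
      simp only [Finset.mem_insert, Finset.mem_singleton] at hne
      push_neg at hne
      induction e using Sym2.ind with
      | _ x y =>
        rw [SimpleGraph.mem_edgeSet] at heE
        rcases x with a | i <;> rcases y with b | j
        · simp [Sym2.lift_mk, hf₀]
        · -- Adj (inl a) (inr j) means a = w
          have ha : a = w := heE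
          subst ha
          fin_cases j
          · exact absurd rfl hne.1
          · exact absurd rfl hne.2
        · have ha : b = w := heE
          subst ha
          fin_cases i
          · exact absurd (Sym2.eq_swap) hne.1
          · exact absurd (Sym2.eq_swap) hne.2
        · exact absurd heE (by intro h; exact h)
  have hmem1 : (1 : ℝ) ∈ {r | ∃ f : V ⊕ Fin 2 → ℝ,
      ∑ x ∈ ({Sum.inr 0, Sum.inr 1} : Finset (V ⊕ Fin 2)), f x = 0 ∧
      (∃ x ∈ ({Sum.inr 0, Sum.inr 1} : Finset (V ⊕ Fin 2)), f x ≠ 0) ∧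
      r = graphEnergy G f / ∑ x ∈ ({Sum.inr 0, Sum.inr 1} : Finset (V ⊕ Fin 2)), f x ^ 2} := by
    refine ⟨f₀, ?_, ⟨Sum.inr 0, by simp, by simp [hf₀]⟩, ?_⟩
    · rw [Finset.sum_pair h01]; simp [hf₀]
    · rw [Finset.sum_pair h01, hE₀]; simp [hf₀]; norm_num
  have hlb : ∀ r ∈ {r | ∃ f : V ⊕ Fin 2 → ℝ,
      ∑ x ∈ ({Sum.inr 0, Sum.inr 1} : Finset (V ⊕ Fin 2)), f x = 0 ∧
      (∃ x ∈ ({Sum.inr 0, Sum.inr 1} : Finset (V ⊕ Fin 2)), f x ≠ 0) ∧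
      r = graphEnergy G f / ∑ x ∈ ({Sum.inr 0, Sum.inr 1} : Finset (V ⊕ Fin 2)), f x ^ 2},
      (1 : ℝ) ≤ r := by
    rintro r ⟨f, hsum, ⟨x, hxB, hxne⟩, hr⟩
    rw [Finset.sum_pair h01] at hsum
    rw [Finset.sum_pair h01] at hr
    set a := f (Sum.inr 0) with ha
    have hb : f (Sum.inr 1) = -a := by linarith
    have hane : a ≠ 0 := by
      simp only [Finset.mem_insert, Finset.mem_singleton] at hxB
      rcases hxB with h | h <;> subst h
      · exact hxne
      · intro h; rw [h] at hb; simp [hb] at hxne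
    have hEge : 2 * a ^ 2 ≤ graphEnergy G f := by
      have hsub : ({e1, e2} : Finset (Sym2 (V ⊕ Fin 2))) ⊆ G.edgeSet.toFinite.toFinset := by
        intro e he
        simp only [Finset.mem_insert, Finset.mem_singleton] at he
        rw [Set.Finite.mem_toFinset]
        rcases he with h | h <;> subst h <;> assumption
      have := Finset.sum_le_sum_of_subset_of_nonneg hsub
        (fun e _ _ => lift_sq_nonneg f e)
      rw [Finset.sum_pair he12] at this
      simp only [he1def, he2def, Sym2.lift_mk] at this
      rw [← ha, hb] at this
      unfold graphEnergy
      nlinarith [this, sq_nonneg (f (Sum.inl w))]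
    have hd : (0:ℝ) < a ^ 2 + (-a) ^ 2 := by
      have := mul_self_pos.mpr hane
      nlinarith [this]
    rw [hr, hb, le_div_iff₀ hd]
    nlinarith [hEge]
  refine le_antisymm (csInf_le ⟨1, hlb⟩ hmem1) (le_csInf ⟨1, hmem1⟩ hlb)
end

section
/- Let D ≥ 3 and n ≥ 2 be integers. Let G be the graph consisting of two vertices a and b joined by D − 1 internally disjoint paths of length n (so each path has n − 1 distinct internal vertices), together with a pendant vertex u adjacent to a and a pendant vertex v adjacent to b, and set δΩ = {u, v}. Then G is a planar graph of maximum degree D and diameter n + 2, and λ₂(G, δΩ) ≥ 2(D − 1) / (n + 2(D − 1)). In particular, for fixed n the quantity λ₂(G, δΩ) tends to 1 as D → ∞, so there is no upper bound of the form λ₂ ≤ c/L (L the diameter) for planar graphs. -/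
open Finset

variable {V : Type*}

/-- Adjacency (as a boolean predicate) for the graph made of two hub vertices
`a = .inl 0`, `b = .inl 1` joined by `D - 1` internally disjoint paths of length `n`
(with internal vertices `(i, k)`, `k = 0, …, n-2`), a pendant `u = .inr (.inl 0)`
adjacent to `a`, and a pendant `v = .inr (.inl 1)` adjacent to `b`. -/
def thetaAdjB (D n : ℕ) :
    Fin 2 ⊕ Fin 2 ⊕ Fin (D - 1) × Fin (n - 1) →
      Fin 2 ⊕ Fin 2 ⊕ Fin (D - 1) × Fin (n - 1) → Bool
  | .inl c, .inr (.inl c') => c == c'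
  | .inr (.inl c'), .inl c => c == c'
  | .inl c, .inr (.inr z) => (c == 0 && z.2.val == 0) || (c == 1 && z.2.val == n - 2)
  | .inr (.inr z), .inl c => (c == 0 && z.2.val == 0) || (c == 1 && z.2.val == n - 2)
  | .inr (.inr z), .inr (.inr z') =>
      z.1 == z'.1 && (z.2.val + 1 == z'.2.val || z'.2.val + 1 == z.2.val)
  | _, _ => false

/-- Two vertices joined by `D - 1` internally disjoint paths of length `n`, together with
one pendant vertex at each of the two hubs. -/
def thetaGraph (D n : ℕ) : SimpleGraph (Fin 2 ⊕ Fin 2 ⊕ Fin (D - 1) × Fin (n - 1)) where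
  Adj x y := thetaAdjB D n x y = true
  symm := by
    constructor
    rintro (c | c | z) (c' | c' | z') h <;> simp_all [thetaAdjB] <;> omega
  loopless := by
    constructor
    rintro (c | c | z) h <;> simp_all [thetaAdjB]

instance (D n : ℕ) : DecidableRel (thetaGraph D n).Adj := fun x y =>
  decidable_of_iff (thetaAdjB D n x y = true) Iff.rfl

abbrev θV (D n : ℕ) := Fin 2 ⊕ Fin 2 ⊕ Fin (D - 1) × Fin (n - 1)

/-- The `k`-th vertex along the `i`-th path from `a` to `b`. -/
def thetaChain (D n : ℕ) (i : Fin (D - 1)) (k : ℕ) : θV D n :=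
  if _ : k = 0 then Sum.inl 0
  else if h : k < n then Sum.inr (Sum.inr (i, ⟨k - 1, by omega⟩))
  else Sum.inl 1

lemma thetaChain_zero (D n : ℕ) (i : Fin (D - 1)) : thetaChain D n i 0 = Sum.inl 0 := rfl

lemma thetaChain_n (D n : ℕ) (hn : 1 ≤ n) (i : Fin (D - 1)) : thetaChain D n i n = Sum.inl 1 := by
  unfold thetaChain
  rw [dif_neg (by omega), dif_neg (by omega)]

lemma thetaChain_adj (D n : ℕ) (hn : 2 ≤ n) (i : Fin (D - 1)) (k : ℕ) (hk : k < n) :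
    (thetaGraph D n).Adj (thetaChain D n i k) (thetaChain D n i (k + 1)) := by
  show thetaAdjB D n _ _ = true
  unfold thetaChain
  rcases Nat.eq_zero_or_pos k with rfl | hpos
  · rw [dif_pos rfl, dif_neg (by omega), dif_pos (by omega)]
    simp [thetaAdjB]
  · rw [dif_neg (by omega), dif_pos hk, dif_neg (by omega)]
    rcases Nat.lt_or_ge (k + 1) n with h | h
    · rw [dif_pos h]
      simp [thetaAdjB]
      omega
    · rw [dif_neg (by omega)]
      simp [thetaAdjB]
      omega

lemma edist_chain {V : Type*} (G : SimpleGraph V) (g : ℕ → V) :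
    ∀ m : ℕ, (∀ j < m, G.Adj (g j) (g (j + 1))) → G.edist (g 0) (g m) ≤ m := by
  intro m
  induction m with
  | zero => intro _; simp [SimpleGraph.edist_self]
  | succ m ih =>
    intro h
    have h1 : G.edist (g 0) (g (m + 1)) ≤ G.edist (g 0) (g m) + G.edist (g m) (g (m + 1)) :=
      SimpleGraph.edist_triangle
    have h2 : G.edist (g m) (g (m + 1)) = 1 :=
      (SimpleGraph.edist_eq_one_iff_adj).mpr (h m (by omega))
    calc G.edist (g 0) (g (m+1)) ≤ _ := h1
      _ ≤ (m : ℕ∞) + 1 := by rw [h2]; exact add_le_add_left (ih fun j hj => h j (by omega)) 1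
      _ = ((m + 1 : ℕ) : ℕ∞) := by push_cast; rfl

section Diam
variable (D n : ℕ)

/-- distance-to-`a` upper bound -/
def thAlpha (n : ℕ) : θV D n → ℕ
  | .inl c => if c.val = 0 then 0 else n
  | .inr (.inl c) => if c.val = 0 then 1 else n + 1
  | .inr (.inr z) => z.2.val + 1

/-- distance-to-`b` upper bound -/
def thBeta (n : ℕ) : θV D n → ℕ
  | .inl c => if c.val = 0 then n else 0
  | .inr (.inl c) => if c.val = 0 then n + 1 else 1
  | .inr (.inr z) => n - 1 - z.2.val

lemma edist_a_le (hD : 3 ≤ D) (hn : 2 ≤ n) (x : θV D n) :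
    (thetaGraph D n).edist (Sum.inl 0) x ≤ (thAlpha D n x : ℕ∞) := by
  have i0 : Fin (D - 1) := ⟨0, by omega⟩
  have hab : (thetaGraph D n).edist (Sum.inl 0) (Sum.inl 1) ≤ (n : ℕ∞) := by
    have := edist_chain (thetaGraph D n) (thetaChain D n i0) n
      (fun j hj => thetaChain_adj D n hn i0 j hj)
    rwa [thetaChain_zero, thetaChain_n D n (by omega)] at this
  rcases x with c | c | ⟨i, k⟩
  · rcases Fin.exists_fin_two.mp ⟨c, rfl⟩ with rfl | rfl
    · simp [thAlpha, SimpleGraph.edist_self]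
    · simpa [thAlpha] using hab
  · rcases Fin.exists_fin_two.mp ⟨c, rfl⟩ with rfl | rfl
    · have : (thetaGraph D n).Adj (Sum.inl 0) (Sum.inr (Sum.inl 0)) := by
        show thetaAdjB D n _ _ = true; simp [thetaAdjB]
      simp [thAlpha, (SimpleGraph.edist_eq_one_iff_adj.mpr this).le]
    · have hbv : (thetaGraph D n).edist (Sum.inl 1) (Sum.inr (Sum.inl 1)) = 1 := by
        apply SimpleGraph.edist_eq_one_iff_adj.mpr
        show thetaAdjB D n _ _ = true; simp [thetaAdjB]
      calc (thetaGraph D n).edist (Sum.inl 0) (Sum.inr (Sum.inl 1)) ≤ _ :=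
            SimpleGraph.edist_triangle (v := Sum.inl 1)
        _ ≤ (n : ℕ∞) + 1 := by rw [hbv]; exact add_le_add_left hab 1
        _ = ((n + 1 : ℕ) : ℕ∞) := by push_cast; rfl
        _ ≤ _ := by simp [thAlpha]
  · have hkn : k.val + 1 < n := by have := k.isLt; omega
    have := edist_chain (thetaGraph D n) (thetaChain D n i) (k.val + 1)
      (fun j hj => thetaChain_adj D n hn i j (by omega))
    rw [thetaChain_zero] at this
    have hch : thetaChain D n i (k.val + 1) = Sum.inr (Sum.inr (i, k)) := by
      unfold thetaChain
      rw [dif_neg (by omega), dif_pos hkn]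
      simp
    rw [hch] at this
    simpa [thAlpha] using this

lemma edist_b_le (hD : 3 ≤ D) (hn : 2 ≤ n) (x : θV D n) :
    (thetaGraph D n).edist x (Sum.inl 1) ≤ (thBeta D n x : ℕ∞) := by
  have i0 : Fin (D - 1) := ⟨0, by omega⟩
  have hab : (thetaGraph D n).edist (Sum.inl 0) (Sum.inl 1) ≤ (n : ℕ∞) := by
    have := edist_chain (thetaGraph D n) (thetaChain D n i0) n
      (fun j hj => thetaChain_adj D n hn i0 j hj)
    rwa [thetaChain_zero, thetaChain_n D n (by omega)] at this
  rcases x with c | c | ⟨i, k⟩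
  · rcases Fin.exists_fin_two.mp ⟨c, rfl⟩ with rfl | rfl
    · simpa [thBeta] using hab
    · simp [thBeta, SimpleGraph.edist_self]
  · rcases Fin.exists_fin_two.mp ⟨c, rfl⟩ with rfl | rfl
    · have hua : (thetaGraph D n).edist (Sum.inr (Sum.inl 0)) (Sum.inl 0) = 1 := by
        apply SimpleGraph.edist_eq_one_iff_adj.mpr
        show thetaAdjB D n _ _ = true; simp [thetaAdjB]
      calc (thetaGraph D n).edist (Sum.inr (Sum.inl 0)) (Sum.inl 1) ≤ _ :=
            SimpleGraph.edist_triangle (v := Sum.inl 0)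
        _ ≤ 1 + (n : ℕ∞) := by rw [hua]; exact add_le_add_right hab 1
        _ = ((n + 1 : ℕ) : ℕ∞) := by push_cast; ring
        _ ≤ _ := by simp [thBeta]
    · have : (thetaGraph D n).Adj (Sum.inr (Sum.inl 1)) (Sum.inl 1) := by
        show thetaAdjB D n _ _ = true; simp [thetaAdjB]
      simp [thBeta, (SimpleGraph.edist_eq_one_iff_adj.mpr this).le]
  · have hkn : k.val + 1 < n := by have := k.isLt; omega
    have := edist_chain (thetaGraph D n) (fun j => thetaChain D n i (k.val + 1 + j))
      (n - 1 - k.val) (fun j hj => thetaChain_adj D n hn i _ (by omega))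
    have hch : thetaChain D n i (k.val + 1) = Sum.inr (Sum.inr (i, k)) := by
      unfold thetaChain
      rw [dif_neg (by omega), dif_pos hkn]
      simp
    rw [add_zero, hch, (by omega : k.val + 1 + (n - 1 - k.val) = n),
      thetaChain_n D n (by omega)] at this
    simpa [thBeta] using this


lemma thAlphaBeta (D n : ℕ) (hn : 2 ≤ n) (x : θV D n) :
    thAlpha D n x + thBeta D n x ≤ n + 2 := by
  rcases x with c | c | ⟨i, k⟩ <;> simp [thAlpha, thBeta] <;>
    first
      | (rcases Fin.exists_fin_two.mp ⟨c, rfl⟩ with rfl | rfl <;> simp <;> omega)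
      | omega

lemma edist_pair_le (D n : ℕ) (hD : 3 ≤ D) (hn : 2 ≤ n) (x y : θV D n) :
    (thetaGraph D n).edist x y ≤ ((n + 2 : ℕ) : ℕ∞) := by
  rcases le_or_gt (thAlpha D n x + thAlpha D n y) (n + 2) with h | h
  · calc (thetaGraph D n).edist x y
        ≤ (thetaGraph D n).edist x (Sum.inl 0) + (thetaGraph D n).edist (Sum.inl 0) y :=
          SimpleGraph.edist_triangle
      _ ≤ (thAlpha D n x : ℕ∞) + (thAlpha D n y : ℕ∞) := by
          refine add_le_add ?_ (edist_a_le D n hD hn y)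
          rw [SimpleGraph.edist_comm]
          exact edist_a_le D n hD hn x
      _ ≤ _ := by
          rw [← Nat.cast_add]
          exact Nat.cast_le.mpr h
  · have h' : thBeta D n x + thBeta D n y ≤ n + 2 := by
      have := thAlphaBeta D n hn x
      have := thAlphaBeta D n hn y
      omega
    calc (thetaGraph D n).edist x y
        ≤ (thetaGraph D n).edist x (Sum.inl 1) + (thetaGraph D n).edist (Sum.inl 1) y :=
          SimpleGraph.edist_triangle
      _ ≤ (thBeta D n x : ℕ∞) + (thBeta D n y : ℕ∞) := by
          refine add_le_add (edist_b_le D n hD hn x) ?_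
          rw [SimpleGraph.edist_comm]
          exact edist_b_le D n hD hn y
      _ ≤ _ := by
          rw [← Nat.cast_add]
          exact Nat.cast_le.mpr h'

end Diam

/-- potential for the lower bound on `edist u v` -/
def thPot (D n : ℕ) : θV D n → ℕ
  | .inl c => if c.val = 0 then 1 else n + 1
  | .inr (.inl c) => if c.val = 0 then 0 else n + 2
  | .inr (.inr z) => z.2.val + 2

lemma thPot_step (D n : ℕ) (hn : 2 ≤ n) (x y : θV D n) (h : (thetaGraph D n).Adj x y) :
    thPot D n y ≤ thPot D n x + 1 := by
  have h' : thetaAdjB D n x y = true := h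
  rcases x with c | c | ⟨i, k⟩ <;> rcases y with c' | c' | ⟨i', k'⟩ <;>
    simp_all [thetaAdjB, thPot]
  all_goals first
    | omega
    | (split <;> omega)
    | (rcases h' with ⟨rfl, h2⟩ | ⟨rfl, h2⟩ <;> simp <;> omega)

lemma walk_pot {V : Type*} (G : SimpleGraph V) (h : V → ℕ)
    (hs : ∀ x y, G.Adj x y → h y ≤ h x + 1) {x y : V} (p : G.Walk x y) :
    h y ≤ h x + p.length := by
  induction p with
  | nil => simp
  | cons hadj p ih =>
    have := hs _ _ hadj
    rw [SimpleGraph.Walk.length_cons]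
    omega

lemma diam_theta (D n : ℕ) (hD : 3 ≤ D) (hn : 2 ≤ n) : (thetaGraph D n).diam = n + 2 := by
  have hub : (thetaGraph D n).ediam ≤ ((n + 2 : ℕ) : ℕ∞) :=
    SimpleGraph.ediam_le_of_edist_le (edist_pair_le D n hD hn)
  have hlb : ((n + 2 : ℕ) : ℕ∞) ≤ (thetaGraph D n).ediam := by
    have hne : (thetaGraph D n).edist (Sum.inr (Sum.inl 0)) (Sum.inr (Sum.inl 1)) ≠ ⊤ :=
      ((edist_pair_le D n hD hn _ _).trans_lt (WithTop.coe_lt_top _)).ne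
    obtain ⟨w, hw⟩ := SimpleGraph.exists_walk_of_edist_ne_top hne
    have hpot := walk_pot (thetaGraph D n) (thPot D n) (thPot_step D n hn) w
    have h1 : thPot D n (Sum.inr (Sum.inl 1) : θV D n) = n + 2 := by simp [thPot]
    have h0 : thPot D n (Sum.inr (Sum.inl 0) : θV D n) = 0 := by simp [thPot]
    rw [h1, h0] at hpot
    calc ((n + 2 : ℕ) : ℕ∞) ≤ (w.length : ℕ∞) := Nat.cast_le.mpr (by omega)
      _ = _ := hw
      _ ≤ _ := SimpleGraph.edist_le_ediam
  have : (thetaGraph D n).ediam = ((n + 2 : ℕ) : ℕ∞) := le_antisymm hub hlb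
  rw [SimpleGraph.diam, this, ENat.toNat_coe]

lemma thetaChain_ne_pendant (D n : ℕ) (i : Fin (D - 1)) (k : ℕ) (c : Fin 2) :
    thetaChain D n i k ≠ Sum.inr (Sum.inl c) := by
  unfold thetaChain; split_ifs <;> simp

lemma thetaChain_eq_iff (D n : ℕ) (hn : 2 ≤ n) (i i' : Fin (D - 1)) (k k' : ℕ)
    (hk : k ≤ n) (hk' : k' ≤ n) :
    thetaChain D n i k = thetaChain D n i' k' ↔
      (k = 0 ∧ k' = 0) ∨ (k = n ∧ k' = n) ∨ (i = i' ∧ k = k') := by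
  unfold thetaChain
  split_ifs <;> simp_all [Fin.ext_iff, Prod.ext_iff] <;> omega

/-- Index of the selected edges: two pendant edges plus the `n` edges of each of the
`D - 1` paths. -/
abbrev thetaEdgeIdx (D n : ℕ) := Fin 2 ⊕ Fin (D - 1) × Fin n

/-- The selected edges themselves. -/
def thetaEdge (D n : ℕ) : thetaEdgeIdx D n → Sym2 (θV D n)
  | .inl c => if c.val = 0 then s(Sum.inr (Sum.inl 0), Sum.inl 0)
              else s(Sum.inl 1, Sum.inr (Sum.inl 1))
  | .inr (i, k) => s(thetaChain D n i k.val, thetaChain D n i (k.val + 1))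

lemma thetaEdge_mem (D n : ℕ) (hn : 2 ≤ n) (t : thetaEdgeIdx D n) :
    thetaEdge D n t ∈ (thetaGraph D n).edgeSet := by
  rcases t with c | ⟨i, k⟩
  · rcases Fin.exists_fin_two.mp ⟨c, rfl⟩ with rfl | rfl <;>
      simp only [thetaEdge, SimpleGraph.mem_edgeSet] <;>
      first
        | (show thetaAdjB D n _ _ = true; simp [thetaAdjB])
        | skip
  · exact ((thetaGraph D n).mem_edgeSet).mpr (thetaChain_adj D n hn i k.val k.isLt)

lemma thetaEdge_inj (D n : ℕ) (hn : 2 ≤ n) : Function.Injective (thetaEdge D n) := by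
  have hne : ∀ (i : Fin (D-1)) (k : ℕ) (c : Fin 2),
      thetaChain D n i k ≠ Sum.inr (Sum.inl c) := fun i k c => thetaChain_ne_pendant D n i k c
  intro t t' h
  rcases t with c | ⟨i, k⟩ <;> rcases t' with c' | ⟨i', k'⟩
  · rcases Fin.exists_fin_two.mp ⟨c, rfl⟩ with rfl | rfl <;>
      rcases Fin.exists_fin_two.mp ⟨c', rfl⟩ with rfl | rfl <;>
      simp_all [thetaEdge, Sym2.eq_iff]
  · exfalso
    have hne' : ∀ (i : Fin (D-1)) (k : ℕ) (c : Fin 2),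
        Sum.inr (Sum.inl c) ≠ thetaChain D n i k := fun i k c => (hne i k c).symm
    rcases Fin.exists_fin_two.mp ⟨c, rfl⟩ with rfl | rfl <;>
      simp [thetaEdge, Sym2.eq_iff, hne, hne'] at h
  · exfalso
    have hne' : ∀ (i : Fin (D-1)) (k : ℕ) (c : Fin 2),
        Sum.inr (Sum.inl c) ≠ thetaChain D n i k := fun i k c => (hne i k c).symm
    rcases Fin.exists_fin_two.mp ⟨c', rfl⟩ with rfl | rfl <;>
      simp [thetaEdge, Sym2.eq_iff, hne, hne'] at h
  · have hk := k.isLt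
    have hk' := k'.isLt
    simp only [thetaEdge, Sym2.eq_iff] at h
    rcases h with ⟨h1, h2⟩ | ⟨h1, h2⟩
    · rw [thetaChain_eq_iff D n hn i i' k.val k'.val (by omega) (by omega)] at h1
      rw [thetaChain_eq_iff D n hn i i' (k.val+1) (k'.val+1) (by omega) (by omega)] at h2
      have : i = i' ∧ k.val = k'.val := by
        rcases h2 with ⟨h,h'⟩ | ⟨h,h'⟩ | ⟨h,h'⟩
        · omega
        · omega
        · rcases h1 with ⟨g,g'⟩ | ⟨g,g'⟩ | ⟨g,g'⟩ <;> first | (exact ⟨h, by omega⟩) | omega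
      obtain ⟨rfl, h3⟩ := this
      cases Fin.ext h3
      rfl
    · rw [thetaChain_eq_iff D n hn i i' k.val (k'.val+1) (by omega) (by omega)] at h1
      rw [thetaChain_eq_iff D n hn i i' (k.val+1) k'.val (by omega) (by omega)] at h2
      exfalso
      rcases h1 with ⟨g,g'⟩ | ⟨g,g'⟩ | ⟨g,g'⟩ <;> rcases h2 with ⟨h,h'⟩ | ⟨h,h'⟩ | ⟨h,h'⟩ <;> omega

lemma chain_cs (g : ℕ → ℝ) (m : ℕ) (hm : 0 < m) :
    (g 0 - g m) ^ 2 / m ≤ ∑ k ∈ Finset.range m, (g k - g (k + 1)) ^ 2 := by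
  rw [div_le_iff₀ (by positivity)]
  have htel : ∑ k ∈ Finset.range m, (g k - g (k + 1)) = g 0 - g m :=
    Finset.sum_range_sub' g m
  calc (g 0 - g m) ^ 2 = (∑ k ∈ Finset.range m, (g k - g (k + 1))) ^ 2 := by rw [htel]
    _ ≤ (Finset.range m).card * ∑ k ∈ Finset.range m, (g k - g (k + 1)) ^ 2 :=
        sq_sum_le_card_mul_sum_sq
    _ = _ := by rw [Finset.card_range]; ring

lemma energy_lower (D n : ℕ) (hD : 3 ≤ D) (hn : 2 ≤ n) (f : θV D n → ℝ) :
    (f (Sum.inr (Sum.inl 0)) - f (Sum.inl 0)) ^ 2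
      + (f (Sum.inl 1) - f (Sum.inr (Sum.inl 1))) ^ 2
      + ((D : ℝ) - 1) * ((f (Sum.inl 0) - f (Sum.inl 1)) ^ 2 / n)
    ≤ graphEnergy (thetaGraph D n) f := by
  classical
  set term : Sym2 (θV D n) → ℝ :=
    Sym2.lift ⟨fun x y => (f x - f y) ^ 2, fun _ _ => by ring⟩ with hterm
  have hnn : ∀ e : Sym2 (θV D n), 0 ≤ term e := by
    intro e
    induction e using Sym2.ind with
    | _ x y => simp only [hterm, Sym2.lift_mk]; positivity
  have hsub : Finset.image (thetaEdge D n) Finset.univ ⊆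
      (thetaGraph D n).edgeSet.toFinite.toFinset := by
    intro e he
    obtain ⟨t, _, rfl⟩ := Finset.mem_image.mp he
    exact (Set.Finite.mem_toFinset _).mpr (thetaEdge_mem D n hn t)
  have h1 : ∑ e ∈ Finset.image (thetaEdge D n) Finset.univ, term e ≤
      graphEnergy (thetaGraph D n) f :=
    Finset.sum_le_sum_of_subset_of_nonneg hsub (fun e _ _ => hnn e)
  have h2 : ∑ e ∈ Finset.image (thetaEdge D n) Finset.univ, term e =
      ∑ t : thetaEdgeIdx D n, term (thetaEdge D n t) :=
    Finset.sum_image (fun x _ y _ h => thetaEdge_inj D n hn h)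
  rw [h2] at h1
  refine le_trans ?_ h1
  rw [Fintype.sum_sum_type, Fin.sum_univ_two]
  have e0 : term (thetaEdge D n (Sum.inl 0)) =
      (f (Sum.inr (Sum.inl 0)) - f (Sum.inl 0)) ^ 2 := by
    simp [thetaEdge, hterm]
  have e1 : term (thetaEdge D n (Sum.inl 1)) =
      (f (Sum.inl 1) - f (Sum.inr (Sum.inl 1))) ^ 2 := by
    simp [thetaEdge, hterm]
  rw [e0, e1, Fintype.sum_prod_type]
  have hpath : ∀ i : Fin (D - 1),
      (f (Sum.inl 0) - f (Sum.inl 1)) ^ 2 / n ≤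
        ∑ k : Fin n, term (thetaEdge D n (Sum.inr (i, k))) := by
    intro i
    have heval : ∀ k : Fin n, term (thetaEdge D n (Sum.inr (i, k))) =
        (f (thetaChain D n i k.val) - f (thetaChain D n i (k.val + 1))) ^ 2 := by
      intro k; simp [thetaEdge, hterm]
    have hcs := chain_cs (fun k => f (thetaChain D n i k)) n (by omega)
    rw [thetaChain_zero, thetaChain_n D n (by omega), ← Fin.sum_univ_eq_sum_range] at hcs
    refine hcs.trans (le_of_eq ?_)
    exact Finset.sum_congr rfl fun k _ => (heval k).symm
  have hsum : ((D : ℝ) - 1) * ((f (Sum.inl 0) - f (Sum.inl 1)) ^ 2 / n) ≤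
      ∑ i : Fin (D - 1), ∑ k : Fin n, term (thetaEdge D n (Sum.inr (i, k))) := by
    calc ((D : ℝ) - 1) * ((f (Sum.inl 0) - f (Sum.inl 1)) ^ 2 / n)
        = ∑ _i : Fin (D - 1), ((f (Sum.inl 0) - f (Sum.inl 1)) ^ 2 / n) := by
          rw [Finset.sum_const, Finset.card_univ, Fintype.card_fin, nsmul_eq_mul]
          congr 1
          rw [Nat.cast_sub (by omega), Nat.cast_one]
      _ ≤ _ := Finset.sum_le_sum (fun i _ => hpath i)
  linarith

lemma scalar_ineq (d n' p q r t : ℝ) (hd : 2 ≤ d) (hn : 2 ≤ n') (hsum : p + q + r = 2 * t) :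
    2 * d / (n' + 2 * d) * (2 * t ^ 2) ≤ p ^ 2 + r ^ 2 + d / n' * q ^ 2 := by
  have hdpos : (0:ℝ) < d := by linarith
  have hnpos : (0:ℝ) < n' := by linarith
  have hden : (0:ℝ) < n' + 2 * d := by linarith
  have heq : p ^ 2 + r ^ 2 + d / n' * q ^ 2 = (p^2*n' + r^2*n' + d*q^2) / n' := by
    field_simp
  rw [heq, div_mul_eq_mul_div, div_le_div_iff₀ hden hnpos]
  have h2 : 2 * d * (2 * t ^ 2) * n' = d * n' * (p + q + r) ^ 2 := by rw [hsum]; ring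
  rw [h2]
  nlinarith [mul_nonneg (mul_pos hnpos hden).le (sq_nonneg (p - r)),
    sq_nonneg (2*d*q - n'*(p+r))]

lemma steklov_lower (D n : ℕ) (hD : 3 ≤ D) (hn : 2 ≤ n) :
    (2 * ((D : ℝ) - 1)) / ((n : ℝ) + 2 * ((D : ℝ) - 1)) ≤
      steklovLambda2 (thetaGraph D n)
        ({Sum.inr (Sum.inl 0), Sum.inr (Sum.inl 1)} :
          Finset (Fin 2 ⊕ Fin 2 ⊕ Fin (D - 1) × Fin (n - 1))) := by
  classical
  set u : θV D n := Sum.inr (Sum.inl 0) with hu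
  set v : θV D n := Sum.inr (Sum.inl 1) with hv
  have huv : u ≠ v := by simp [hu, hv]
  have hDr : (2:ℝ) ≤ (D : ℝ) - 1 := by
    have : (3:ℝ) ≤ (D:ℝ) := by exact_mod_cast hD
    linarith
  have hnr : (2:ℝ) ≤ (n : ℝ) := by exact_mod_cast hn
  apply le_csInf
  · refine ⟨_, (fun x => if x = u then 1 else if x = v then -1 else 0), ?_, ⟨u, ?_, ?_⟩, rfl⟩
    · rw [Finset.sum_pair huv]
      simp [huv, Ne.symm huv]
    · simp
    · simp
  · rintro r ⟨f, hsum, hex, rfl⟩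
    rw [Finset.sum_pair huv] at hsum
    have hfv : f v = -f u := by linarith
    have hfu : f u ≠ 0 := by
      obtain ⟨x, hx, hfx⟩ := hex
      rcases Finset.mem_insert.mp hx with rfl | hx'
      · exact hfx
      · rw [Finset.mem_singleton] at hx'
        subst hx'
        intro h0
        rw [h0] at hfv
        exact hfx (by rw [hfv]; ring)
    rw [Finset.sum_pair huv]
    have hpos : 0 < f u ^ 2 + f v ^ 2 := by
      have : 0 < f u ^ 2 := by positivity
      positivity
    rw [le_div_iff₀ hpos]
    have hkey := scalar_ineq ((D:ℝ) - 1) (n:ℝ)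
      (f u - f (Sum.inl 0)) (f (Sum.inl 0) - f (Sum.inl 1)) (f (Sum.inl 1) - f v)
      (f u) hDr hnr (by rw [hfv]; ring)
    have henergy := energy_lower D n hD hn f
    calc 2 * ((D : ℝ) - 1) / ((n : ℝ) + 2 * ((D : ℝ) - 1)) * (f u ^ 2 + f v ^ 2)
        = 2 * ((D:ℝ) - 1) / ((n:ℝ) + 2 * ((D:ℝ) - 1)) * (2 * f u ^ 2) := by
          rw [hfv]; ring_nf
      _ ≤ (f u - f (Sum.inl 0)) ^ 2 + (f (Sum.inl 1) - f v) ^ 2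
            + ((D:ℝ) - 1) / (n:ℝ) * (f (Sum.inl 0) - f (Sum.inl 1)) ^ 2 := hkey
      _ = (f u - f (Sum.inl 0)) ^ 2 + (f (Sum.inl 1) - f v) ^ 2
            + ((D:ℝ) - 1) * ((f (Sum.inl 0) - f (Sum.inl 1)) ^ 2 / (n:ℝ)) := by ring
      _ ≤ graphEnergy (thetaGraph D n) f := henergy

lemma deg_a (D n : ℕ) (hD : 3 ≤ D) (hn : 2 ≤ n) :
    (thetaGraph D n).degree (Sum.inl 0) = D := by
  have h1 : (0:ℕ) < n - 1 := by omega
  have : (thetaGraph D n).neighborFinset (Sum.inl 0) =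
      insert (Sum.inr (Sum.inl 0))
        ((Finset.univ : Finset (Fin (D-1))).image
          (fun i => Sum.inr (Sum.inr (i, ⟨0, h1⟩)) : Fin (D-1) → θV D n)) := by
    ext y
    rcases y with c | c | ⟨i, k⟩ <;>
      rw [SimpleGraph.mem_neighborFinset] <;> simp only [thetaGraph, thetaAdjB] <;> simp <;>
      simp only [Fin.ext_iff, Fin.val_mk] <;>
      omega
  rw [SimpleGraph.degree, this, Finset.card_insert_of_notMem (by simp),
    Finset.card_image_of_injective _ (by intro x y h; simpa using h)]
  simp; omega

lemma deg_b (D n : ℕ) (hD : 3 ≤ D) (hn : 2 ≤ n) :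
    (thetaGraph D n).degree (Sum.inl 1) = D := by
  have h1 : n - 2 < n - 1 := by omega
  have : (thetaGraph D n).neighborFinset (Sum.inl 1) =
      insert (Sum.inr (Sum.inl 1))
        ((Finset.univ : Finset (Fin (D-1))).image
          (fun i => Sum.inr (Sum.inr (i, ⟨n-2, h1⟩)) : Fin (D-1) → θV D n)) := by
    ext y
    rcases y with c | c | ⟨i, k⟩ <;>
      rw [SimpleGraph.mem_neighborFinset] <;> simp only [thetaGraph, thetaAdjB] <;> simp [Fin.ext_iff] <;>
      omega
  rw [SimpleGraph.degree, this, Finset.card_insert_of_notMem (by simp),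
    Finset.card_image_of_injective _ (by intro x y h; simpa using h)]
  simp; omega

lemma deg_pend (D n : ℕ) (c : Fin 2) :
    (thetaGraph D n).degree (Sum.inr (Sum.inl c)) = 1 := by
  have : (thetaGraph D n).neighborFinset (Sum.inr (Sum.inl c)) = {Sum.inl c} := by
    ext y
    rw [SimpleGraph.mem_neighborFinset]
    rcases y with c' | c' | ⟨i, k⟩ <;>
      simp only [thetaGraph, thetaAdjB, Finset.mem_singleton, beq_iff_eq, Sum.inl.injEq,
        Bool.or_eq_true, Bool.and_eq_true, beq_iff_eq] <;>
    first
      | (constructor <;> (intro h; simp_all [eq_comm]))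
      | simp
  rw [SimpleGraph.degree, this, Finset.card_singleton]

lemma deg_int (D n : ℕ) (hn : 2 ≤ n) (i : Fin (D-1)) (k : Fin (n-1)) :
    (thetaGraph D n).degree (Sum.inr (Sum.inr (i, k))) ≤ 2 := by
  classical
  have hk := k.isLt
  have hsub : (thetaGraph D n).neighborFinset (Sum.inr (Sum.inr (i, k))) ⊆
      {(if k.val = 0 then Sum.inl 0 else Sum.inr (Sum.inr (i, ⟨k.val - 1, by omega⟩)) : θV D n),
       (if h : k.val = n - 2 then (Sum.inl 1 : θV D n)
        else Sum.inr (Sum.inr (i, ⟨k.val + 1, by omega⟩)))} := by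
    intro y hy
    rw [SimpleGraph.mem_neighborFinset] at hy
    simp only [Finset.mem_insert, Finset.mem_singleton]
    rcases y with c | c | ⟨j, m⟩
    · simp only [thetaGraph, thetaAdjB, Bool.or_eq_true, Bool.and_eq_true, beq_iff_eq] at hy
      rcases hy with ⟨h1, h2⟩ | ⟨h1, h2⟩
      · left; rw [h1, if_pos h2]
      · right; rw [h1, dif_pos h2]
    · simp [thetaGraph, thetaAdjB] at hy
    · simp only [thetaGraph, thetaAdjB, Bool.and_eq_true, beq_iff_eq, Bool.or_eq_true,
        Nat.add_eq, beq_iff_eq] at hy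
      obtain ⟨rfl, h2 | h2⟩ := hy
      · right
        have hne : k.val ≠ n - 2 := by omega
        rw [dif_neg hne]
        simp only [Sum.inr.injEq, Prod.mk.injEq, true_and]
        exact Fin.ext (by simp; omega)
      · left
        have hne : k.val ≠ 0 := by omega
        rw [if_neg hne]
        simp only [Sum.inr.injEq, Prod.mk.injEq, true_and]
        exact Fin.ext (by simp; omega)
  calc (thetaGraph D n).degree _ ≤ _ := Finset.card_le_card hsub
    _ ≤ 2 := (Finset.card_insert_le _ _).trans (by simp)

set_option maxHeartbeats 400000 in
lemma maxDeg_theta (D n : ℕ) (hD : 3 ≤ D) (hn : 2 ≤ n) :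
    (thetaGraph D n).maxDegree = D := by
  apply le_antisymm
  · apply SimpleGraph.maxDegree_le_of_forall_degree_le
    intro x
    rcases x with c | c | ⟨i, k⟩
    · rcases Fin.exists_fin_two.mp ⟨c, rfl⟩ with rfl | rfl
      · exact (deg_a D n hD hn).le
      · exact (deg_b D n hD hn).le
    · rw [deg_pend]; omega
    · exact (deg_int D n hn i k).trans (by omega)
  · have h := SimpleGraph.degree_le_maxDegree (thetaGraph D n) (Sum.inl 0 : θV D n)
    rw [deg_a D n hD hn] at h
    exact h

/-- The theta-type graph with two pendants has maximum degree `D`, diameter `n + 2`, and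
`λ₂ ≥ 2(D-1)/(n + 2(D-1))`; in particular this lower bound tends to `1` as `D → ∞`. -/
theorem lambda2_theta_pendants (D n : ℕ) (hD : 3 ≤ D) (hn : 2 ≤ n) :
    (thetaGraph D n).maxDegree = D ∧
    (thetaGraph D n).diam = n + 2 ∧
    (2 * ((D : ℝ) - 1)) / ((n : ℝ) + 2 * ((D : ℝ) - 1)) ≤
      steklovLambda2 (thetaGraph D n)
        ({Sum.inr (Sum.inl 0), Sum.inr (Sum.inl 1)} :
          Finset (Fin 2 ⊕ Fin 2 ⊕ Fin (D - 1) × Fin (n - 1))) ∧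
    Filter.Tendsto (fun d : ℕ => (2 * ((d : ℝ) - 1)) / ((n : ℝ) + 2 * ((d : ℝ) - 1)))
      Filter.atTop (nhds 1) := by
  refine ⟨maxDeg_theta D n hD hn, diam_theta D n hD hn, steklov_lower D n hD hn, ?_⟩
  have hden : Filter.Tendsto (fun d : ℕ => (n : ℝ) + 2 * ((d : ℝ) - 1))
      Filter.atTop Filter.atTop := by
    apply Filter.tendsto_atTop_add_const_left
    apply Filter.Tendsto.const_mul_atTop (by norm_num : (0:ℝ) < 2)
    exact Filter.tendsto_atTop_add_const_right _ _ tendsto_natCast_atTop_atTop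
  have h0 : Filter.Tendsto (fun d : ℕ => (n : ℝ) / ((n : ℝ) + 2 * ((d : ℝ) - 1)))
      Filter.atTop (nhds 0) := by
    simpa using Filter.Tendsto.div_atTop (tendsto_const_nhds (x := (n:ℝ))) hden
  have h1 : Filter.Tendsto (fun d : ℕ => 1 - (n : ℝ) / ((n : ℝ) + 2 * ((d : ℝ) - 1)))
      Filter.atTop (nhds 1) := by
    simpa using (tendsto_const_nhds (x := (1:ℝ))).sub h0
  apply h1.congr'
  filter_upwards [Filter.eventually_ge_atTop 1] with d hd
  have hdr : (1:ℝ) ≤ (d : ℝ) := by exact_mod_cast hd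
  have hnr : (2:ℝ) ≤ (n:ℝ) := by exact_mod_cast hn
  have hpos : (0:ℝ) < (n : ℝ) + 2 * ((d : ℝ) - 1) := by linarith
  field_simp
  ring
end
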